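/- arXiv:1510.08830 — 3 statements merged into one kernel-verified Lean document; each statement's English description precedes it below -/
import Mathlib

section
/- There exists a universal constant C₁ ≥ 1 such that the following holds. Let I be a finite nonempty index set, H a countable group, and η a symmetric probability measure on H. Let X = ∏_{i∈I} H_i where each H_i is a copy of H, and let ζ = (1/|I|) ∑_{i∈I} η_i, where η_i is the probability measure on X given by η_i(x) = η(x_i) if x_j = e_H for all j ≠ i and η_i(x) = 0 otherwise. If v₀ > 0 and s ∈ (0, 1/2] satisfy Λ₁,H,η(v₀) > s, then Λ₁,X,ζ(v) ≥ s/C₁ for every v ≤ C₁⁻¹ · v₀^{|I|/C₁}. -/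
open scoped Pointwise

namespace Paper

/-- A symmetric (discrete) probability measure on a group. -/
def IsSymmProb {G : Type*} [Group G] (φ : G → ℝ) : Prop :=
  (∀ g, 0 ≤ φ g) ∧ (∀ g, φ g⁻¹ = φ g) ∧ HasSum φ 1

/-- The boundary weight `φ(∂Ω) = ∑_{x ∈ Ω} ∑_{y : xy ∉ Ω} φ(y)` of a finite set `Ω`. -/
noncomputable def boundaryWeight {G : Type*} [Group G] (φ : G → ℝ) (Ω : Finset G) : ℝ :=
  ∑ x ∈ Ω, ∑' y : G, Set.indicator {y | x * y ∉ Ω} φ y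

/-- The `L¹`-isoperimetric profile
`Λ₁(v) = inf {|Ω|⁻¹ φ(∂Ω) : Ω finite nonempty, |Ω| ≤ v}`. -/
noncomputable def lambdaOne {G : Type*} [Group G] (φ : G → ℝ) (v : ℝ) : ℝ :=
  sInf ((fun Ω : Finset G => (Ω.card : ℝ)⁻¹ * boundaryWeight φ Ω) ''
    {Ω : Finset G | Ω.Nonempty ∧ (Ω.card : ℝ) ≤ v})

/-- The Dirichlet form `E_φ(f,f) = (1/2) ∑_{x,y} |f(yx) - f(x)|² φ(y)`. -/
noncomputable def dirichletForm {G : Type*} [Group G] (φ : G → ℝ) (f : G → ℝ) : ℝ :=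
  (1 / 2) * ∑' p : G × G, |f (p.2 * p.1) - f p.1| ^ 2 * φ p.2

/-- The `L²`-isoperimetric (spectral) profile. -/
noncomputable def lambdaTwo {G : Type*} [Group G] (φ : G → ℝ) (v : ℝ) : ℝ :=
  sInf ((fun f : G → ℝ => dirichletForm φ f) ''
    {f : G → ℝ | (Function.support f).Finite ∧ ((Function.support f).ncard : ℝ) ≤ v ∧
      (∑' x : G, f x ^ 2) = 1})

/-- Ball of radius `r` for the word metric associated with a (symmetric) set `S`. -/
def wordBall {G : Type*} [Group G] (S : Set G) (r : ℕ) : Set G :=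
  {g | ∃ L : List G, (∀ x ∈ L, x ∈ S) ∧ L.length ≤ r ∧ L.prod = g}

/-- Word length of `g` with respect to the set `S`. -/
noncomputable def wordLength {G : Type*} [Group G] (S : Set G) (g : G) : ℕ :=
  sInf {n : ℕ | g ∈ wordBall S n}

/-- Ball of radius `r` about `o` in the Schreier graph of the action of `Γ` on `X`
with edges given by the set `S`. -/
def schreierBall {Γ : Type*} {X : Type*} [Group Γ] [MulAction Γ X] (S : Set Γ) (o : X)
    (r : ℕ) : Set X :=
  {y | ∃ L : List Γ, (∀ g ∈ L, g ∈ S) ∧ L.length ≤ r ∧ L.prod • o = y}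

/-- The inverted orbit `𝒪(w; x) = {w₁⋯w_l·x, w₁⋯w_{l-1}·x, …, w₁·x, x}` of `x` under the
word given by the list `L = [w₁, …, w_l]`. -/
def invertedOrbit {Γ : Type*} {X : Type*} [Group Γ] [MulAction Γ X] (L : List Γ) (x : X) :
    Set X :=
  {y | ∃ j ≤ L.length, (L.take j).prod • x = y}

/-- Uniform probability measure on a set. -/
noncomputable def unifOn {G : Type*} (A : Set G) : G → ℝ :=
  A.indicator fun _ => (A.ncard : ℝ)⁻¹

open Classical in
/-- Amenability of a (discrete) group, via the Følner condition. -/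
def IsAmenable (G : Type*) [Group G] : Prop :=
  ∀ (T : Finset G) (ε : ℝ), 0 < ε → ∃ F : Finset G, F.Nonempty ∧
    ∀ s ∈ T, (((F.image fun g => s * g) \ F).card : ℝ) ≤ ε * F.card

open Classical in
/-- `n`-fold convolution power of a measure on a discrete group. -/
noncomputable def convPow {G : Type*} [Group G] (μ : G → ℝ) : ℕ → G → ℝ
  | 0 => fun g => if g = 1 then 1 else 0
  | n + 1 => fun g => ∑' h : G, μ h * convPow μ n (h⁻¹ * g)

section Wreath

/-- The restricted direct product `⊕_{x ∈ X} H`, as a subgroup of `X → H`. -/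
def Lamps (X : Type*) (H : Type*) [Group H] : Subgroup (X → H) where
  carrier := {f | (Function.mulSupport f).Finite}
  one_mem' := by
    have h : Function.mulSupport (1 : X → H) = ∅ := Function.mulSupport_one
    simp only [Set.mem_setOf_eq, h]
    exact Set.finite_empty
  mul_mem' := by
    intro f g hf hg
    exact Set.Finite.subset (Set.Finite.union hf hg) (Function.mulSupport_mul f g)
  inv_mem' := by
    intro f hf
    show (Function.mulSupport f⁻¹).Finite
    have h : Function.mulSupport f⁻¹ = Function.mulSupport f := by
      ext x
      simp [Function.mem_mulSupport]
    rw [h]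
    exact hf

variable (Γ : Type*) [Group Γ] (X : Type*) [MulAction Γ X] (H : Type*) [Group H]

/-- The coordinate-permutation automorphism `(g·f)(x) = f(g⁻¹·x)` of `⊕_{x ∈ X} H`. -/
def lampShift (γ : Γ) : Lamps X H ≃* Lamps X H where
  toFun f := ⟨fun x => (f : X → H) (γ⁻¹ • x), by
    have hf : (Function.mulSupport (f : X → H)).Finite := f.2
    refine Set.Finite.subset (hf.image fun x => γ • x) ?_
    intro x hx
    exact ⟨γ⁻¹ • x, hx, smul_inv_smul γ x⟩⟩
  invFun f := ⟨fun x => (f : X → H) (γ • x), by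
    have hf : (Function.mulSupport (f : X → H)).Finite := f.2
    refine Set.Finite.subset (hf.image fun x => γ⁻¹ • x) ?_
    intro x hx
    exact ⟨γ • x, hx, inv_smul_smul γ x⟩⟩
  left_inv f := Subtype.ext <| funext fun x => by simp
  right_inv f := Subtype.ext <| funext fun x => by simp
  map_mul' f g := rfl

/-- The permutation action of `Γ` on lamp configurations, as a homomorphism to `MulAut`. -/
def wreathAction : Γ →* MulAut (Lamps X H) where
  toFun γ := lampShift Γ X H γ
  map_one' := by
    refine MulEquiv.ext fun f => Subtype.ext <| funext fun x => ?_
    show (f : X → H) ((1 : Γ)⁻¹ • x) = (f : X → H) x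
    simp
  map_mul' γ₁ γ₂ := by
    refine MulEquiv.ext fun f => Subtype.ext <| funext fun x => ?_
    show (f : X → H) ((γ₁ * γ₂)⁻¹ • x) = (f : X → H) (γ₂⁻¹ • γ₁⁻¹ • x)
    rw [mul_inv_rev, mul_smul]

/-- The permutation wreath product `H ≀_X Γ = (⊕_{x ∈ X} H) ⋊ Γ`. -/
abbrev PWreath := SemidirectProduct (Lamps X H) Γ (wreathAction Γ X H)

/-- The action of the wreath product on the base space (through `Γ`). -/
instance pwreathBaseAction : MulAction (PWreath Γ X H) X where
  smul g x := g.right • x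
  one_smul x := by
    show (1 : PWreath Γ X H).right • x = x
    rw [SemidirectProduct.one_right, one_smul]
  mul_smul g₁ g₂ x := by
    show (g₁ * g₂).right • x = g₁.right • g₂.right • x
    rw [SemidirectProduct.mul_right g₁ g₂, mul_smul]

open Classical in
/-- The lamp configuration equal to `h` at `x₀` and trivial elsewhere. -/
noncomputable def lampAt (X : Type*) (H : Type*) [Group H] (x₀ : X) (h : H) : Lamps X H :=
  ⟨fun x => if x = x₀ then h else 1, by
    refine Set.Finite.subset (Set.finite_singleton x₀) ?_
    intro x hx
    by_contra hne
    simp only [Set.mem_singleton_iff] at hne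
    exact hx (if_neg hne)⟩

/-- The two lamp generators `(±1₁^o, e)` of `ℤ ≀_X Γ`. -/
noncomputable def lampGenSet (o : X) : Set (PWreath Γ X (Multiplicative ℤ)) :=
  {SemidirectProduct.inl (lampAt X (Multiplicative ℤ) o (Multiplicative.ofAdd 1)),
   SemidirectProduct.inl (lampAt X (Multiplicative ℤ) o (Multiplicative.ofAdd (-1)))}

/-- The switch-or-walk measure `𝔮 = (1/2)(η + μ)` on `ℤ ≀_X Γ`, `η` uniform on
`{(±1₁^o, e)}` and `μ` uniform on the generating set `S` of `Γ`. -/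
noncomputable def switchOrWalk (o : X) (S : Set Γ) :
    PWreath Γ X (Multiplicative ℤ) → ℝ := fun g =>
  (1 / 2) * unifOn (lampGenSet Γ X o) g +
  (1 / 2) * unifOn ((fun γ : Γ =>
    (SemidirectProduct.inr γ : PWreath Γ X (Multiplicative ℤ))) '' S) g

/-- The switch-or-walk generating set `{(±1₁^o, e)} ∪ S` of `ℤ ≀_X Γ`. -/
noncomputable def swGenSet (o : X) (S : Set Γ) : Set (PWreath Γ X (Multiplicative ℤ)) :=
  lampGenSet Γ X o ∪
    (fun γ : Γ => (SemidirectProduct.inr γ : PWreath Γ X (Multiplicative ℤ))) '' S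

open Classical in
/-- A `(J,B)`-admissible function on the finite subsets of `X`: there is `A ⊆ X` such that
every `Y` in the support of `F` has the form `Y = g·A` with `J ⊆ Y ⊆ B`. -/
def Admissible {Γ : Type*} [Group Γ] {X : Type*} [MulAction Γ X] (J B : Finset X)
    (F : Finset X → ℝ) : Prop :=
  ∃ A : Finset X, ∀ Y : Finset X, F Y ≠ 0 →
    (∃ g : Γ, Y = A.image fun x => g • x) ∧ J ⊆ Y ∧ Y ⊆ B

/-- The set `Ω(J,B)` of words (in the letters of `S`) all of whose inverted orbits
starting from points of `J` stay in `B`. -/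
def OmegaSet {Γ : Type*} [Group Γ] {X : Type*} [MulAction Γ X] (S : Set Γ)
    (J B : Finset X) : Set (List Γ) :=
  {L | (∀ g ∈ L, g ∈ S) ∧ ∀ x ∈ J, invertedOrbit L x ⊆ (B : Set X)}

end Wreath

section Letters

/-- The four letters `α, α⁻¹, β, β⁻¹`. -/
inductive GLetter : Type
  | A | A' | B | B'

/-- Formal inverse of a letter. -/
def GLetter.inv : GLetter → GLetter
  | .A => .A'
  | .A' => .A
  | .B => .B'
  | .B' => .B

/-- Action of a letter, given the four functions realizing `α, α⁻¹, β, β⁻¹`. -/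
def GLetter.apply {V : Type*} (fA fA' fB fB' : V → V) : GLetter → V → V
  | .A => fA
  | .A' => fA'
  | .B => fB
  | .B' => fB'

/-- `wordApply [γ₁, …, γ_p] x = γ₁·(γ₂·( … (γ_p·x)))`. -/
def wordApply {V : Type*} (fA fA' fB fB' : V → V) (L : List GLetter) (x : V) : V :=
  L.foldr (fun γ y => γ.apply fA fA' fB fB' y) x

end Letters

section NeumannSegal

/-!  Cyclic Neumann–Segal groups.  The group acts (faithfully) on the boundary of the
spherically homogeneous rooted tree with level-`i` alphabet `{0, …, l i - 1}` (`i ≥ 1`);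
a boundary point is the sequence of its letters, the letter at (paper) level `i + 1`
being coordinate `i`. -/

/-- Boundary of the rooted tree with level-`i` alphabet of size `l i`, `i ≥ 1`. -/
def NSSpace (l : ℕ → ℕ) : Type := ∀ i : ℕ, ZMod (l (i + 1))

/-- The rooted automorphism `α`: adds `1` to the first letter. -/
noncomputable def nsAlpha (l : ℕ → ℕ) : NSSpace l → NSSpace l :=
  fun w => Function.update w 0 (w 0 + 1)

/-- Inverse of `α`. -/
noncomputable def nsAlphaInv (l : ℕ → ℕ) : NSSpace l → NSSpace l :=
  fun w => Function.update w 0 (w 0 - 1)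

open Classical in
/-- The directed automorphism `β`: along the ray `0^∞`, at the first nonzero letter `x_j`,
if `x_j = l_j/2` then it applies `α` to the remaining suffix (i.e. adds `1` to the next
letter), and otherwise acts trivially. -/
noncomputable def nsBeta (l : ℕ → ℕ) : NSSpace l → NSSpace l := fun w =>
  if h : ∃ j, w j ≠ 0 then
    let j := Nat.find h
    if w j = ((l (j + 1) / 2 : ℕ) : ZMod (l (j + 1))) then
      Function.update w (j + 1) (w (j + 1) + 1)
    else w
  else w

open Classical in
/-- Inverse of `β`. -/
noncomputable def nsBetaInv (l : ℕ → ℕ) : NSSpace l → NSSpace l := fun w =>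
  if h : ∃ j, w j ≠ 0 then
    let j := Nat.find h
    if w j = ((l (j + 1) / 2 : ℕ) : ZMod (l (j + 1))) then
      Function.update w (j + 1) (w (j + 1) - 1)
    else w
  else w

/-- The generators `α^{±1}, β^{±1}` of the cyclic Neumann–Segal group, as permutations of
the boundary. -/
noncomputable def nsGens (l : ℕ → ℕ) : Set (Equiv.Perm (NSSpace l)) :=
  {π | ⇑π = nsAlpha l ∨ ⇑π = nsBeta l ∨ ⇑π⁻¹ = nsAlpha l ∨ ⇑π⁻¹ = nsBeta l}

/-- The cyclic Neumann–Segal group `Γ = ⟨α, β⟩`. -/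
noncomputable def NSGroup (l : ℕ → ℕ) : Subgroup (Equiv.Perm (NSSpace l)) :=
  Subgroup.closure (nsGens l)

/-- The generators, as elements of the Neumann–Segal group. -/
noncomputable def nsGenSub (l : ℕ → ℕ) : Set (NSGroup l) :=
  {γ | (γ : Equiv.Perm (NSSpace l)) ∈ nsGens l}

/-- The ray `o = 0^∞`. -/
def nsO (l : ℕ → ℕ) : NSSpace l := fun _ => 0

/-- The basepoint `0^∞` of the orbital Schreier graph `𝒮`, as a point of the orbit. -/
noncomputable def nsOrbitPt (l : ℕ → ℕ) : MulAction.orbit (NSGroup l) (nsO l) :=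
  ⟨nsO l, MulAction.mem_orbit_self _⟩

/-- The permutation wreath product `ℤ ≀_𝒮 Γ` over the orbital Schreier graph `𝒮` of `0^∞`. -/
noncomputable abbrev NSWreath (l : ℕ → ℕ) :=
  PWreath (NSGroup l) (MulAction.orbit (NSGroup l) (nsO l)) (Multiplicative ℤ)

/-- The switch-or-walk measure on `ℤ ≀_𝒮 Γ`. -/
noncomputable def nsSW (l : ℕ → ℕ) : NSWreath l → ℝ :=
  switchOrWalk (NSGroup l) (MulAction.orbit (NSGroup l) (nsO l)) (nsOrbitPt l) (nsGenSub l)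

/-- Vertices of level `n` of the rooted tree. -/
def NSLevel (l : ℕ → ℕ) (n : ℕ) : Type := ∀ i : Fin n, ZMod (l (i.1 + 1))

/-- Extension of a level-`n` vertex to a boundary point, by zeros. -/
noncomputable def nsPad (l : ℕ → ℕ) {n : ℕ} (w : NSLevel l n) : NSSpace l :=
  fun i => if h : i < n then w ⟨i, h⟩ else 0

/-- Truncation of a boundary point to level `n`. -/
def nsTrunc (l : ℕ → ℕ) (n : ℕ) (x : NSSpace l) : NSLevel l n := fun i => x i.1

/-- Action of a generator letter on level-`n` vertices. -/
noncomputable def nsLevelApply (l : ℕ → ℕ) (n : ℕ) (γ : GLetter) (w : NSLevel l n) :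
    NSLevel l n :=
  nsTrunc l n (GLetter.apply (nsAlpha l) (nsAlphaInv l) (nsBeta l) (nsBetaInv l) γ
    (nsPad l w))

/-- The vertex `u_n = 0^n`. -/
def nsLevelO (l : ℕ → ℕ) (n : ℕ) : NSLevel l n := fun _ => 0

/-- Ball of radius `r` about `u_n = 0^n` in the orbital Schreier graph `𝒮_n` of `u_n`. -/
noncomputable def nsLevelBall (l : ℕ → ℕ) (n r : ℕ) : Set (NSLevel l n) :=
  {y | ∃ L : List GLetter, L.length ≤ r ∧
    L.foldr (fun γ z => nsLevelApply l n γ z) (nsLevelO l n) = y}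

end NeumannSegal

section Bubble

/-!  Bubble groups.  A vertex of the bubble graph is a pair `(w, u)` where `w` is a word
whose letter at position `i` lies in the branching alphabet `{1, …, b i - 1}` (encoded as
`ZMod (b i - 1)`, the letter `z` being encoded as `z - 1`) and `u ∈ ZMod (2 * a k)`
(`k = |w|`) is a position on the bubble (cycle) of length `2 * a k` indexed by `w`. -/

/-- Vertex set of the bubble graph `X_{a,b}`. -/
def BubbleVert (a b : ℕ → ℕ) : Type :=
  Σ k : ℕ, ((i : Fin k) → ZMod (b i.1 - 1)) × ZMod (2 * a k)

/-- `α` rotates every bubble: it advances the position `u` by one. -/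
noncomputable def bubAlpha (a b : ℕ → ℕ) : BubbleVert a b → BubbleVert a b :=
  fun v => ⟨v.1, v.2.1, v.2.2 + 1⟩

/-- Inverse of `α`. -/
noncomputable def bubAlphaInv (a b : ℕ → ℕ) : BubbleVert a b → BubbleVert a b :=
  fun v => ⟨v.1, v.2.1, v.2.2 - 1⟩

/-- `β` rotates every branching cycle
`(w, a_k) → (w·1, 0) → (w·2, 0) → ⋯ → (w·(b_k - 1), 0) → (w, a_k)`,
and fixes all other vertices (self-loops). -/
noncomputable def bubBeta (a b : ℕ → ℕ) : BubbleVert a b → BubbleVert a b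
  | ⟨0, w, u⟩ =>
      if u = ((a 0 : ℕ) : ZMod (2 * a 0)) ∧ u ≠ 0 then ⟨1, Fin.snoc w 0, 0⟩
      else ⟨0, w, u⟩
  | ⟨k + 1, w, u⟩ =>
      if u = ((a (k + 1) : ℕ) : ZMod (2 * a (k + 1))) ∧ u ≠ 0 then
        ⟨k + 2, Fin.snoc w 0, 0⟩
      else if u = 0 then
        (if w (Fin.last k) = ((b k - 2 : ℕ) : ZMod (b k - 1)) then
          ⟨k, Fin.init w, ((a k : ℕ) : ZMod (2 * a k))⟩
        else
          ⟨k + 1, Function.update w (Fin.last k) (w (Fin.last k) + 1), u⟩)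
      else ⟨k + 1, w, u⟩

/-- Inverse of `β`. -/
noncomputable def bubBetaInv (a b : ℕ → ℕ) : BubbleVert a b → BubbleVert a b
  | ⟨0, w, u⟩ =>
      if u = ((a 0 : ℕ) : ZMod (2 * a 0)) ∧ u ≠ 0 then
        ⟨1, Fin.snoc w ((b 0 - 2 : ℕ) : ZMod (b 0 - 1)), 0⟩
      else ⟨0, w, u⟩
  | ⟨k + 1, w, u⟩ =>
      if u = ((a (k + 1) : ℕ) : ZMod (2 * a (k + 1))) ∧ u ≠ 0 then
        ⟨k + 2, Fin.snoc w ((b (k + 1) - 2 : ℕ) : ZMod (b (k + 1) - 1)), 0⟩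
      else if u = 0 then
        (if w (Fin.last k) = 0 then
          ⟨k, Fin.init w, ((a k : ℕ) : ZMod (2 * a k))⟩
        else
          ⟨k + 1, Function.update w (Fin.last k) (w (Fin.last k) - 1), u⟩)
      else ⟨k + 1, w, u⟩

/-- The generators `α^{±1}, β^{±1}`, as permutations of the bubble graph. -/
noncomputable def bubGens (a b : ℕ → ℕ) : Set (Equiv.Perm (BubbleVert a b)) :=
  {π | ⇑π = bubAlpha a b ∨ ⇑π = bubBeta a b ∨ ⇑π⁻¹ = bubAlpha a b ∨ ⇑π⁻¹ = bubBeta a b}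

/-- The bubble group `Γ_{a,b} = ⟨α, β⟩`. -/
noncomputable def BubbleGroup (a b : ℕ → ℕ) : Subgroup (Equiv.Perm (BubbleVert a b)) :=
  Subgroup.closure (bubGens a b)

/-- The generators, as elements of the bubble group. -/
noncomputable def bubGenSub (a b : ℕ → ℕ) : Set (BubbleGroup a b) :=
  {γ | (γ : Equiv.Perm (BubbleVert a b)) ∈ bubGens a b}

/-- The root `o` of the bubble graph. -/
def bubRoot (a b : ℕ → ℕ) : BubbleVert a b := ⟨0, fun i => i.elim0, 0⟩

/-- The midpoint `𝔪_k = (1^k, ⌊a_k/2⌋)` on the bubble indexed by the word `1^k`. -/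
def bubM (a b : ℕ → ℕ) (k : ℕ) : BubbleVert a b :=
  ⟨k, fun _ => 0, ((a k / 2 : ℕ) : ZMod (2 * a k))⟩

/-- Application of a word of letters to a vertex of the bubble graph. -/
noncomputable def bubApply (a b : ℕ → ℕ) (L : List GLetter) (x : BubbleVert a b) :
    BubbleVert a b :=
  wordApply (bubAlpha a b) (bubAlphaInv a b) (bubBeta a b) (bubBetaInv a b) L x

/-- Ball of radius `r` about `x` in the bubble graph. -/
noncomputable def bubBall (a b : ℕ → ℕ) (x : BubbleVert a b) (r : ℕ) :
    Set (BubbleVert a b) :=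
  {y | ∃ L : List GLetter, L.length ≤ r ∧ bubApply a b L x = y}

/-- Inverted orbit of `x` under a word of letters. -/
noncomputable def bubInvOrbit (a b : ℕ → ℕ) (L : List GLetter) (x : BubbleVert a b) :
    Set (BubbleVert a b) :=
  {y | ∃ j ≤ L.length, bubApply a b (L.take j) x = y}

/-- `α^s` for `s : ℤ`. -/
noncomputable def bubAlphaZPow (a b : ℕ → ℕ) (s : ℤ) (x : BubbleVert a b) :
    BubbleVert a b :=
  if 0 ≤ s then (bubAlpha a b)^[s.toNat] x else (bubAlphaInv a b)^[(-s).toNat] x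

/-- Number of vertices in the first `j` levels of the bubble graph (words of length `< j`). -/
def bubLevelCard (a b : ℕ → ℕ) (j : ℕ) : ℕ :=
  ∑ m ∈ Finset.range j, (∏ i ∈ Finset.range m, (b i - 1)) * (2 * a m)

end Bubble

end Paper

open Paper

open Classical in
/-- The measure `ζ = (1/|I|) ∑_{i ∈ I} η_i` on `X = ∏_{i ∈ I} H`. -/
noncomputable def prodMeasure (I : Type) [Fintype I] (H : Type) [Group H] (η : H → ℝ) :
    (I → H) → ℝ := fun x =>
  (Fintype.card I : ℝ)⁻¹ * ∑ i : I, if (∀ j, j ≠ i → x j = 1) then η (x i) else 0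

namespace IsoAux


open Finset

/-! ### AM-GM consequence -/

lemma prod_le_pow_of_sum_le_sq {X : Type*} (Ω : Finset X) (t : X → ℝ)
    (ht : ∀ x ∈ Ω, 0 ≤ t x) (h : ∑ x ∈ Ω, t x ≤ (Ω.card : ℝ) ^ 2) :
    ∏ x ∈ Ω, t x ≤ (Ω.card : ℝ) ^ Ω.card := by
  rcases Ω.eq_empty_or_nonempty with rfl | hne
  · simp
  have hN : 0 < (Ω.card : ℝ) := by exact_mod_cast Finset.card_pos.2 hne
  have hw : ∑ _x ∈ Ω, ((Ω.card : ℝ))⁻¹ = 1 := by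
    rw [Finset.sum_const, nsmul_eq_mul, mul_inv_cancel₀ hN.ne']
  have amgm := Real.geom_mean_le_arith_mean_weighted Ω (fun _ => ((Ω.card : ℝ))⁻¹) t
    (fun _ _ => by positivity) hw ht
  have h1 : ∏ x ∈ Ω, t x ^ ((Ω.card : ℝ))⁻¹ = (∏ x ∈ Ω, t x) ^ ((Ω.card : ℝ))⁻¹ :=
    Real.finset_prod_rpow Ω t ht _
  have h2 : ∑ x ∈ Ω, ((Ω.card : ℝ))⁻¹ * t x ≤ (Ω.card : ℝ) := by
    rw [← Finset.mul_sum]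
    calc ((Ω.card : ℝ))⁻¹ * ∑ x ∈ Ω, t x ≤ ((Ω.card : ℝ))⁻¹ * (Ω.card : ℝ) ^ 2 := by
          exact mul_le_mul_of_nonneg_left h (by positivity)
      _ = (Ω.card : ℝ) := by field_simp [sq]
  have h3 : (∏ x ∈ Ω, t x) ^ ((Ω.card : ℝ))⁻¹ ≤ (Ω.card : ℝ) := by
    rw [← h1]; exact amgm.trans h2
  have hP : 0 ≤ ∏ x ∈ Ω, t x := Finset.prod_nonneg ht
  have h4 := Real.rpow_le_rpow (Real.rpow_nonneg hP _) h3 (Nat.cast_nonneg Ω.card)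
  rw [← Real.rpow_mul hP, inv_mul_cancel₀ hN.ne', Real.rpow_one] at h4
  rwa [Real.rpow_natCast] at h4


/-! ### Two transverse partitions -/

lemma sum_card_mul_card_le {X : Type*} [DecidableEq X] (Ω : Finset X) (f g : X → Finset X)
    (hfsub : ∀ x ∈ Ω, f x ⊆ Ω) (hgsub : ∀ x ∈ Ω, g x ⊆ Ω)
    (hfmem : ∀ x ∈ Ω, x ∈ f x) (hgmem : ∀ x ∈ Ω, x ∈ g x)
    (hfcell : ∀ x ∈ Ω, ∀ y ∈ f x, f y = f x) (hgcell : ∀ x ∈ Ω, ∀ y ∈ g x, g y = g x)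
    (htr : ∀ x ∈ Ω, ∀ y, y ∈ f x → y ∈ g x → y = x) :
    ∑ x ∈ Ω, (f x).card * (g x).card ≤ Ω.card * Ω.card := by
  have hcard : ∀ x ∈ Ω, (f x).card = ∑ y ∈ Ω, if y ∈ f x then 1 else 0 := by
    intro x hx
    rw [← Finset.card_filter]
    congr 1
    rw [Finset.filter_mem_eq_inter, Finset.inter_eq_right.2 (hfsub x hx)]
  have hcard' : ∀ x ∈ Ω, (g x).card = ∑ z ∈ Ω, if z ∈ g x then 1 else 0 := by
    intro x hx
    rw [← Finset.card_filter]
    congr 1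
    rw [Finset.filter_mem_eq_inter, Finset.inter_eq_right.2 (hgsub x hx)]
  calc ∑ x ∈ Ω, (f x).card * (g x).card
      = ∑ x ∈ Ω, ∑ y ∈ Ω, ∑ z ∈ Ω,
          ((if y ∈ f x then 1 else 0) * if z ∈ g x then 1 else 0) := by
        refine Finset.sum_congr rfl fun x hx => ?_
        rw [hcard x hx, hcard' x hx, Finset.sum_mul_sum]
    _ = ∑ y ∈ Ω, ∑ z ∈ Ω, ∑ x ∈ Ω,
          ((if y ∈ f x then 1 else 0) * if z ∈ g x then 1 else 0) := by
        rw [Finset.sum_comm]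
        refine Finset.sum_congr rfl fun y _ => Finset.sum_comm
    _ ≤ ∑ y ∈ Ω, ∑ z ∈ Ω, 1 := by
        refine Finset.sum_le_sum fun y hy => Finset.sum_le_sum fun z hz => ?_
        have : ∑ x ∈ Ω, ((if y ∈ f x then 1 else 0) * if z ∈ g x then 1 else 0)
            = (Ω.filter (fun x => y ∈ f x ∧ z ∈ g x)).card := by
          rw [Finset.card_filter]
          refine Finset.sum_congr rfl fun x _ => ?_
          by_cases h1 : y ∈ f x <;> by_cases h2 : z ∈ g x <;> simp [h1, h2]
        rw [this]
        refine Finset.card_le_one.2 ?_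
        intro a ha b hb
        simp only [Finset.mem_filter] at ha hb
        obtain ⟨haΩ, hya, hza⟩ := ha
        obtain ⟨hbΩ, hyb, hzb⟩ := hb
        have hyΩ : y ∈ Ω := hfsub a haΩ hya
        have hfab : f a = f b := by
          rw [← hfcell a haΩ y hya, ← hfcell b hbΩ y hyb]
        have hgab : g a = g b := by
          rw [← hgcell a haΩ z hza, ← hgcell b hbΩ z hzb]
        have hbfa : b ∈ f a := by rw [hfab]; exact hfmem b hbΩ
        have hbga : b ∈ g a := by rw [hgab]; exact hgmem b hbΩ
        exact (htr a haΩ b hbfa hbga).symm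
    _ = Ω.card * Ω.card := by simp [Finset.sum_const, mul_comm]

lemma twopart {X : Type*} [DecidableEq X] (Ω : Finset X) (f g : X → Finset X)
    (hfsub : ∀ x ∈ Ω, f x ⊆ Ω) (hgsub : ∀ x ∈ Ω, g x ⊆ Ω)
    (hfmem : ∀ x ∈ Ω, x ∈ f x) (hgmem : ∀ x ∈ Ω, x ∈ g x)
    (hfcell : ∀ x ∈ Ω, ∀ y ∈ f x, f y = f x) (hgcell : ∀ x ∈ Ω, ∀ y ∈ g x, g y = g x)
    (htr : ∀ x ∈ Ω, ∀ y, y ∈ f x → y ∈ g x → y = x) :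
    ∏ x ∈ Ω, (((f x).card : ℝ) * ((g x).card : ℝ)) ≤ (Ω.card : ℝ) ^ Ω.card := by
  refine prod_le_pow_of_sum_le_sq Ω _ (fun x _ => by positivity) ?_
  have := sum_card_mul_card_le Ω f g hfsub hgsub hfmem hgmem hfcell hgcell htr
  calc ∑ x ∈ Ω, (((f x).card : ℝ) * ((g x).card : ℝ))
      = ((∑ x ∈ Ω, (f x).card * (g x).card : ℕ) : ℝ) := by push_cast; ring_nf
    _ ≤ ((Ω.card * Ω.card : ℕ) : ℝ) := by exact_mod_cast this
    _ = (Ω.card : ℝ) ^ 2 := by push_cast; ring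


/-! ### Fibers in a product and Han's inequality -/

variable {I H : Type*}

open Classical in
/-- The fiber of `x` in `Ω` in direction `i`: elements of `Ω` agreeing with `x`
off the coordinate `i`. -/
noncomputable def fibF [One H] (Ω : Finset (I → H)) (i : I) (x : I → H) :
    Finset (I → H) :=
  Ω.filter (fun y => ∀ j, j ≠ i → y j = x j)

lemma mem_fibF [One H] {Ω : Finset (I → H)} {i : I} {x y : I → H} :
    y ∈ fibF Ω i x ↔ y ∈ Ω ∧ ∀ j, j ≠ i → y j = x j := by
  classical
  simp [fibF]

lemma fibF_subset [One H] (Ω : Finset (I → H)) (i : I) (x : I → H) :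
    fibF Ω i x ⊆ Ω := fun y hy => (mem_fibF.1 hy).1

lemma self_mem_fibF [One H] {Ω : Finset (I → H)} {i : I} {x : I → H} (hx : x ∈ Ω) :
    x ∈ fibF Ω i x := mem_fibF.2 ⟨hx, fun _ _ => rfl⟩

lemma fibF_cell [One H] {Ω : Finset (I → H)} {i : I} {x y : I → H}
    (hy : y ∈ fibF Ω i x) : fibF Ω i y = fibF Ω i x := by
  obtain ⟨-, hyx⟩ := mem_fibF.1 hy
  ext z
  simp only [mem_fibF]
  constructor
  · rintro ⟨hz, h⟩; exact ⟨hz, fun j hj => (h j hj).trans (hyx j hj)⟩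
  · rintro ⟨hz, h⟩; exact ⟨hz, fun j hj => (h j hj).trans (hyx j hj).symm⟩

lemma fibF_card_pos [One H] {Ω : Finset (I → H)} {i : I} {x : I → H} (hx : x ∈ Ω) :
    0 < (fibF Ω i x).card :=
  Finset.card_pos.2 ⟨x, self_mem_fibF hx⟩

/-- Han's inequality, multiplicative counting form. -/
lemma han [One H] (J : Finset I) :
    ∀ Ω : Finset (I → H),
      ∏ i ∈ J, ∏ x ∈ Ω, ((fibF Ω i x).card : ℝ) ≤ (Ω.card : ℝ) ^ Ω.card := by
  classical
  induction J using Finset.induction_on with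
  | empty =>
      intro Ω
      simp only [Finset.prod_empty]
      rcases Nat.eq_zero_or_pos Ω.card with h | h
      · simp [h]
      · exact one_le_pow₀ (by exact_mod_cast h)
  | @insert i₀ J' hni IH =>
      intro Ω
      set lay : H → Finset (I → H) := fun a => Ω.filter (fun x => x i₀ = a) with hlay
      have laysub : ∀ a, lay a ⊆ Ω := fun a => Finset.filter_subset _ _
      have memlay : ∀ {x a}, x ∈ lay a ↔ x ∈ Ω ∧ x i₀ = a := by
        intro x a; simp [hlay]
      -- Key 2 : the J' part is bounded by the product of layer sizes
      have key2 : ∏ i ∈ J', ∏ x ∈ Ω, ((fibF Ω i x).card : ℝ)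
          ≤ ∏ x ∈ Ω, ((lay (x i₀)).card : ℝ) := by
        have swap : ∏ i ∈ J', ∏ x ∈ Ω, ((fibF Ω i x).card : ℝ)
            = ∏ x ∈ Ω, ∏ i ∈ J', ((fibF Ω i x).card : ℝ) := Finset.prod_comm
        have fiber : ∀ F : (I → H) → ℝ,
            ∏ x ∈ Ω, F x =
              ∏ b ∈ Ω.image (fun x => x i₀), ∏ x ∈ lay b, F x := by
          intro F
          exact (Finset.prod_fiberwise_of_maps_to
            (fun x hx => Finset.mem_image_of_mem _ hx) F).symm
        rw [swap, fiber (fun x => ∏ i ∈ J', ((fibF Ω i x).card : ℝ)),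
          fiber (fun x => ((lay (x i₀)).card : ℝ))]
        refine Finset.prod_le_prod (fun b _ => Finset.prod_nonneg fun x _ =>
          Finset.prod_nonneg fun i _ => by positivity) ?_
        intro b hb
        -- within layer b, fibers in direction i ≠ i₀ coincide with fibers of the layer
        have hfib_eq : ∀ i ∈ J', ∀ x ∈ lay b, fibF Ω i x = fibF (lay b) i x := by
          intro i hi x hx
          have hii : i ≠ i₀ := fun h => hni (h ▸ hi)
          obtain ⟨hxΩ, hxb⟩ := memlay.1 hx
          ext z
          simp only [mem_fibF, memlay]
          constructor
          · rintro ⟨hz, h⟩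
            exact ⟨⟨hz, (h i₀ (Ne.symm hii)).trans hxb⟩, h⟩
          · rintro ⟨⟨hz, -⟩, h⟩
            exact ⟨hz, h⟩
        have step1 : ∏ x ∈ lay b, ∏ i ∈ J', ((fibF Ω i x).card : ℝ)
            = ∏ i ∈ J', ∏ x ∈ lay b, ((fibF (lay b) i x).card : ℝ) := by
          rw [Finset.prod_comm]
          exact Finset.prod_congr rfl fun i hi => Finset.prod_congr rfl fun x hx => by
            rw [hfib_eq i hi x hx]
        have step2 : ∏ x ∈ lay b, ((lay (x i₀)).card : ℝ)
            = ((lay b).card : ℝ) ^ (lay b).card := by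
          rw [Finset.prod_congr rfl (fun x hx => by rw [(memlay.1 hx).2]),
            Finset.prod_const]
        rw [step1, step2]
        exact IH (lay b)
      -- Key 1 : two-partition bound
      have key1 : (∏ x ∈ Ω, ((fibF Ω i₀ x).card : ℝ)) *
          ∏ x ∈ Ω, ((lay (x i₀)).card : ℝ) ≤ (Ω.card : ℝ) ^ Ω.card := by
        rw [← Finset.prod_mul_distrib]
        refine twopart Ω (fibF Ω i₀) (fun x => lay (x i₀))
          (fun x _ => fibF_subset Ω i₀ x) (fun x hx => laysub _)
          (fun x hx => self_mem_fibF hx) (fun x hx => memlay.2 ⟨hx, rfl⟩)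
          (fun x _ y hy => fibF_cell hy) ?_ ?_
        · intro x hx y hy
          rw [(memlay.1 hy).2]
        · intro x hx y hyf hyg
          funext j
          by_cases hj : j = i₀
          · rw [hj]; exact (memlay.1 hyg).2
          · exact (mem_fibF.1 hyf).2 j hj
      rw [Finset.prod_insert hni]
      calc (∏ x ∈ Ω, ((fibF Ω i₀ x).card : ℝ)) *
            ∏ i ∈ J', ∏ x ∈ Ω, ((fibF Ω i x).card : ℝ)
          ≤ (∏ x ∈ Ω, ((fibF Ω i₀ x).card : ℝ)) *
            ∏ x ∈ Ω, ((lay (x i₀)).card : ℝ) := by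
            exact mul_le_mul_of_nonneg_left key2
              (Finset.prod_nonneg fun x _ => by positivity)
        _ ≤ (Ω.card : ℝ) ^ Ω.card := key1


/-! ### Basic facts about `boundaryWeight` and `lambdaOne` -/

lemma boundaryWeight_nonneg {G : Type*} [Group G] {φ : G → ℝ} (hφ : ∀ g, 0 ≤ φ g)
    (Ω : Finset G) : 0 ≤ boundaryWeight φ Ω :=
  Finset.sum_nonneg fun x _ => tsum_nonneg fun y =>
    Set.indicator_nonneg (fun g _ => hφ g) y

lemma lambdaOne_le {G : Type*} [Group G] {φ : G → ℝ} (hφ : ∀ g, 0 ≤ φ g) {v : ℝ}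
    {Ω : Finset G} (hne : Ω.Nonempty) (hcard : (Ω.card : ℝ) ≤ v) :
    lambdaOne φ v ≤ (Ω.card : ℝ)⁻¹ * boundaryWeight φ Ω := by
  refine csInf_le ⟨0, ?_⟩ ⟨Ω, ⟨hne, hcard⟩, rfl⟩
  rintro r ⟨Ω', -, rfl⟩
  exact mul_nonneg (inv_nonneg.2 (Nat.cast_nonneg _)) (boundaryWeight_nonneg hφ Ω')

/-! ### Slices -/

section Slices

variable {I : Type} [Fintype I] {H : Type} [Group H] (η : H → ℝ)

open Classical in
/-- One summand of the product measure. -/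
noncomputable def psiF (i : I) : (I → H) → ℝ := fun y =>
  if (∀ j, j ≠ i → y j = 1) then η (y i) else 0

open Classical in
/-- The embedding of `H` into the `i`-th axis. -/
noncomputable def axisF (i : I) (h : H) : I → H := Function.update (1 : I → H) i h

open Classical in
/-- The slice of `Ω` through `x` in direction `i`, as a subset of `H`. -/
noncomputable def slF (Ω : Finset (I → H)) (i : I) (x : I → H) : Finset H :=
  (fibF Ω i x).image fun y => y i

/-- Per-point boundary term in direction `i`. -/
noncomputable def TF (Ω : Finset (I → H)) (i : I) (x : I → H) : ℝ :=
  ∑' h : H, Set.indicator {h : H | x i * h ∉ slF Ω i x} η h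

lemma axisF_inj (i : I) : Function.Injective (axisF (H := H) i) := by
  classical
  intro a b hab
  have := congrFun hab i
  simpa [axisF] using this

lemma psiF_apply_axisF (i : I) (h : H) : psiF η i (axisF i h) = η h := by
  classical
  have hcond : ∀ j, j ≠ i → axisF (H := H) i h j = 1 := by
    intro j hj; simp [axisF, Function.update_of_ne hj]
  simp only [psiF]
  rw [if_pos hcond]
  simp [axisF]

lemma psiF_support (i : I) {y : I → H} (hy : psiF η i y ≠ 0) :
    y ∈ Set.range (axisF (H := H) i) := by
  classical
  by_cases hc : ∀ j, j ≠ i → y j = 1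
  · refine ⟨y i, ?_⟩
    funext j
    by_cases hj : j = i
    · subst hj; simp [axisF]
    · simp [axisF, Function.update_of_ne hj, hc j hj]
  · exact absurd (by simp [psiF, hc]) hy

lemma summable_psiF (hη : Summable η) (i : I) : Summable (psiF (H := H) η i) := by
  have hcomp : psiF (H := H) η i ∘ axisF i = η := funext fun h => psiF_apply_axisF η i h
  refine ((axisF_inj (H := H) i).summable_iff ?_).1 (by rwa [hcomp])
  intro y hy
  by_contra h0
  exact hy (psiF_support η i h0)

lemma mul_axisF_mem_iff {Ω : Finset (I → H)} {i : I} {x : I → H} {h : H} :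
    x * axisF i h ∈ Ω ↔ x i * h ∈ slF Ω i x := by
  classical
  have hxa : x * axisF i h = Function.update x i (x i * h) := by
    funext j
    by_cases hj : j = i
    · subst hj; simp [axisF]
    · simp [axisF, Function.update_of_ne hj]
  constructor
  · intro hmem
    refine Finset.mem_image.2 ⟨Function.update x i (x i * h), ?_, Function.update_self _ _ _⟩
    refine mem_fibF.2 ⟨hxa ▸ hmem, fun j hj => Function.update_of_ne hj _ _⟩
  · intro hmem
    obtain ⟨y, hy, hyi⟩ := Finset.mem_image.1 hmem
    obtain ⟨hyΩ, hagr⟩ := mem_fibF.1 hy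
    have : y = Function.update x i (x i * h) := by
      funext j
      by_cases hj : j = i
      · subst hj; simpa using hyi
      · rw [Function.update_of_ne hj]; exact hagr j hj
    rw [hxa, ← this]
    exact hyΩ

lemma card_slF {Ω : Finset (I → H)} {i : I} (x : I → H) :
    (slF Ω i x).card = (fibF Ω i x).card := by
  classical
  refine Finset.card_image_of_injOn ?_
  intro y hy z hz hyz
  obtain ⟨-, hagry⟩ := mem_fibF.1 hy
  obtain ⟨-, hagrz⟩ := mem_fibF.1 hz
  funext j
  by_cases hj : j = i
  · subst hj; exact hyz
  · rw [hagry j hj, hagrz j hj]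

lemma slF_nonempty {Ω : Finset (I → H)} {i : I} {x : I → H} (hx : x ∈ Ω) :
    (slF Ω i x).Nonempty := by
  classical
  exact ⟨x i, Finset.mem_image_of_mem _ (self_mem_fibF hx)⟩

/-- Decomposition of the boundary weight of the product measure. -/
lemma bw_decomp (hη : Summable η) (Ω : Finset (I → H)) :
    boundaryWeight (prodMeasure I H η) Ω =
      (Fintype.card I : ℝ)⁻¹ * ∑ i : I, ∑ x ∈ Ω, TF η Ω i x := by
  classical
  have per_x : ∀ x : I → H,
      ∑' y : I → H, Set.indicator {y | x * y ∉ Ω} (prodMeasure I H η) y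
        = (Fintype.card I : ℝ)⁻¹ * ∑ i : I, TF η Ω i x := by
    intro x
    set S : Set (I → H) := {y | x * y ∉ Ω} with hS
    have hpt : Set.indicator S (prodMeasure I H η)
        = fun y => (Fintype.card I : ℝ)⁻¹ * ∑ i : I, Set.indicator S (psiF η i) y := by
      funext y
      by_cases hy : y ∈ S
      · simp only [Set.indicator_of_mem hy, prodMeasure, psiF, Finset.mul_sum]
      · simp [Set.indicator_of_notMem hy]
    have hsumm : ∀ i : I, Summable (Set.indicator S (psiF (H := H) η i)) :=
      fun i => (summable_psiF η hη i).indicator S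
    have hper_i : ∀ i : I, ∑' y : I → H, Set.indicator S (psiF η i) y = TF η Ω i x := by
      intro i
      have hsupp : Function.support (Set.indicator S (psiF (H := H) η i))
          ⊆ Set.range (axisF (H := H) i) := by
        intro y hy
        have : psiF (H := H) η i y ≠ 0 := by
          intro h0
          exact hy (by simp [Set.indicator_apply, h0])
        exact psiF_support η i this
      rw [← Function.Injective.tsum_eq (axisF_inj (H := H) i) hsupp]
      unfold TF
      congr 1
      funext h
      have hval : psiF η i (axisF i h) = η h := psiF_apply_axisF η i h
      by_cases hmem : x i * h ∈ slF Ω i x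
      · have h1 : axisF (H := H) i h ∉ S := by
          simp only [hS, Set.mem_setOf_eq, not_not]
          exact mul_axisF_mem_iff.2 hmem
        have h2 : h ∉ {h : H | x i * h ∉ slF Ω i x} := by
          simp [hmem]
        rw [Set.indicator_of_notMem h1, Set.indicator_of_notMem h2]
      · have h1 : axisF (H := H) i h ∈ S := by
          simp only [hS, Set.mem_setOf_eq]
          intro hc
          exact hmem (mul_axisF_mem_iff.1 hc)
        have h2 : h ∈ {h : H | x i * h ∉ slF Ω i x} := hmem
        rw [Set.indicator_of_mem h1, Set.indicator_of_mem h2, hval]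
    calc ∑' y : I → H, Set.indicator S (prodMeasure I H η) y
        = ∑' y : I → H, (Fintype.card I : ℝ)⁻¹ *
            ∑ i : I, Set.indicator S (psiF η i) y := by rw [hpt]
      _ = (Fintype.card I : ℝ)⁻¹ *
            ∑' y : I → H, ∑ i : I, Set.indicator S (psiF η i) y := tsum_mul_left
      _ = (Fintype.card I : ℝ)⁻¹ *
            ∑ i : I, ∑' y : I → H, Set.indicator S (psiF η i) y := by
          rw [Summable.tsum_finsetSum fun i _ => hsumm i]
      _ = (Fintype.card I : ℝ)⁻¹ * ∑ i : I, TF η Ω i x := by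
          rw [Finset.sum_congr rfl fun i _ => hper_i i]
  unfold boundaryWeight
  rw [Finset.sum_congr rfl fun x _ => per_x x, ← Finset.mul_sum, Finset.sum_comm]

lemma TF_nonneg (hpos : ∀ g, 0 ≤ η g) (Ω : Finset (I → H)) (i : I) (x : I → H) :
    0 ≤ TF η Ω i x :=
  tsum_nonneg fun h => Set.indicator_nonneg (fun g _ => hpos g) h

/-- Per-direction lower bound on the sum of the boundary terms. -/
lemma sum_TF_ge (hpos : ∀ g, 0 ≤ η g) {s v₀ : ℝ} (hs : 0 ≤ s)
    (hL : s < lambdaOne η v₀) (Ω : Finset (I → H)) (i : I) :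
    s * ((Ω.filter fun x => ((fibF Ω i x).card : ℝ) ≤ v₀).card : ℝ)
      ≤ ∑ x ∈ Ω, TF η Ω i x := by
  classical
  set g : (I → H) → (I → H) := fun x => Function.update x i 1 with hg
  have hiff : ∀ y x : I → H, g y = g x ↔ ∀ j, j ≠ i → y j = x j := by
    intro y x
    constructor
    · intro h j hj
      have := congrFun h j
      simp only [hg] at this
      rwa [Function.update_of_ne hj, Function.update_of_ne hj] at this
    · intro h
      funext j
      by_cases hj : j = i
      · subst hj; simp [hg]
      · rw [hg]
        simp only []
        rw [Function.update_of_ne hj, Function.update_of_ne hj]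
        exact h j hj
  have hfilter_eq : ∀ x₀, Ω.filter (fun y => g y = g x₀) = fibF Ω i x₀ := by
    intro x₀
    ext y
    simp only [Finset.mem_filter, mem_fibF, hiff]
  have hsum := Finset.sum_fiberwise_of_maps_to
    (fun x (hx : x ∈ Ω) => Finset.mem_image_of_mem g hx) (fun x => TF η Ω i x)
  have hcnt := Finset.sum_fiberwise_of_maps_to
    (fun x (hx : x ∈ Ω) => Finset.mem_image_of_mem g hx)
    (fun x => if ((fibF Ω i x).card : ℝ) ≤ v₀ then (1 : ℝ) else 0)
  have hcard : ((Ω.filter fun x => ((fibF Ω i x).card : ℝ) ≤ v₀).card : ℝ)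
      = ∑ x ∈ Ω, if ((fibF Ω i x).card : ℝ) ≤ v₀ then (1 : ℝ) else 0 :=
    (Finset.sum_boole _ _).symm
  rw [hcard, ← hsum, ← hcnt, Finset.mul_sum]
  refine Finset.sum_le_sum ?_
  intro b hb
  obtain ⟨x₀, hx₀, rfl⟩ := Finset.mem_image.1 hb
  rw [hfilter_eq x₀]
  have hfibx : ∀ x ∈ fibF Ω i x₀, fibF Ω i x = fibF Ω i x₀ := fun x hx => fibF_cell hx
  have hslx : ∀ x ∈ fibF Ω i x₀, slF Ω i x = slF Ω i x₀ := by
    intro x hx; unfold slF; rw [hfibx x hx]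
  -- the sum of the boundary terms over the fiber is the boundary weight of the slice
  have hTsum : ∑ x ∈ fibF Ω i x₀, TF η Ω i x = boundaryWeight η (slF Ω i x₀) := by
    have h1 : ∑ x ∈ fibF Ω i x₀, TF η Ω i x
        = ∑ x ∈ fibF Ω i x₀,
            ∑' h : H, Set.indicator {h : H | x i * h ∉ slF Ω i x₀} η h := by
      refine Finset.sum_congr rfl fun x hx => ?_
      unfold TF
      rw [hslx x hx]
    have hinj : ∀ x ∈ fibF Ω i x₀, ∀ y ∈ fibF Ω i x₀, x i = y i → x = y := by
      intro x hx y hy hxy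
      obtain ⟨-, hax⟩ := mem_fibF.1 hx
      obtain ⟨-, hay⟩ := mem_fibF.1 hy
      funext j
      by_cases hj : j = i
      · subst hj; exact hxy
      · rw [hax j hj, hay j hj]
    have h2 : ∑ a ∈ slF Ω i x₀,
          (∑' h : H, Set.indicator {h : H | a * h ∉ slF Ω i x₀} η h)
        = ∑ x ∈ fibF Ω i x₀,
            ∑' h : H, Set.indicator {h : H | x i * h ∉ slF Ω i x₀} η h := by
      exact Finset.sum_image hinj
    rw [h1, ← h2]
    rfl
  rw [hTsum]
  by_cases hsmall : ((fibF Ω i x₀).card : ℝ) ≤ v₀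
  · have hite : ∀ x ∈ fibF Ω i x₀,
        (if ((fibF Ω i x).card : ℝ) ≤ v₀ then (1 : ℝ) else 0) = 1 := by
      intro x hx
      rw [hfibx x hx]
      exact if_pos hsmall
    rw [Finset.sum_congr rfl hite, Finset.sum_const, nsmul_eq_mul, mul_one]
    have hslcard : ((slF Ω i x₀).card : ℝ) ≤ v₀ := by rw [card_slF]; exact hsmall
    have hlam := lambdaOne_le hpos (slF_nonempty hx₀) hslcard
    have hpos' : (0 : ℝ) < ((slF Ω i x₀).card : ℝ) := by
      exact_mod_cast Finset.card_pos.2 (slF_nonempty hx₀)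
    have : s * ((slF Ω i x₀).card : ℝ) ≤ boundaryWeight η (slF Ω i x₀) := by
      have h3 : s ≤ ((slF Ω i x₀).card : ℝ)⁻¹ * boundaryWeight η (slF Ω i x₀) :=
        le_of_lt (lt_of_lt_of_le hL hlam)
      calc s * ((slF Ω i x₀).card : ℝ)
          ≤ (((slF Ω i x₀).card : ℝ)⁻¹ * boundaryWeight η (slF Ω i x₀)) *
            ((slF Ω i x₀).card : ℝ) := by
            exact mul_le_mul_of_nonneg_right h3 hpos'.le
        _ = boundaryWeight η (slF Ω i x₀) := by field_simp
    calc s * ((fibF Ω i x₀).card : ℝ) = s * ((slF Ω i x₀).card : ℝ) := by rw [card_slF]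
      _ ≤ boundaryWeight η (slF Ω i x₀) := this
  · have hite : ∀ x ∈ fibF Ω i x₀,
        (if ((fibF Ω i x).card : ℝ) ≤ v₀ then (1 : ℝ) else 0) = 0 := by
      intro x hx
      rw [hfibx x hx]
      exact if_neg hsmall
    rw [Finset.sum_congr rfl hite, Finset.sum_const, smul_zero, mul_zero]
    exact boundaryWeight_nonneg hpos _

/-- The main per-set estimate. -/
lemma main_bound (hI : Nonempty I) (hη : IsSymmProb η) {v₀ s v : ℝ} (hs : 0 < s)
    (hL : s < lambdaOne η v₀) (hv₀ : 1 < v₀)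
    (hv : v ≤ 2⁻¹ * v₀ ^ ((Fintype.card I : ℝ) / 2))
    (Ω : Finset (I → H)) (hne : Ω.Nonempty) (hcard : (Ω.card : ℝ) ≤ v) :
    s / 2 ≤ (Ω.card : ℝ)⁻¹ * boundaryWeight (prodMeasure I H η) Ω := by
  classical
  have hpos : ∀ g, 0 ≤ η g := hη.1
  have hv₀pos : (0 : ℝ) < v₀ := lt_trans one_pos hv₀
  set n := Fintype.card I with hn
  have hnpos : 0 < n := Fintype.card_pos
  set N := Ω.card with hNdef
  have hNpos : 0 < N := Finset.card_pos.2 hne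
  have hNposR : (0 : ℝ) < (N : ℝ) := by exact_mod_cast hNpos
  -- big-fiber counting via Han's inequality
  set B : ℕ := ∑ i : I, (Ω.filter fun x => ¬ ((fibF Ω i x).card : ℝ) ≤ v₀).card with hB
  have hprod_i : ∀ i : I, v₀ ^ (Ω.filter fun x => ¬ ((fibF Ω i x).card : ℝ) ≤ v₀).card
      ≤ ∏ x ∈ Ω, ((fibF Ω i x).card : ℝ) := by
    intro i
    calc v₀ ^ (Ω.filter fun x => ¬ ((fibF Ω i x).card : ℝ) ≤ v₀).card
        = ∏ x ∈ Ω, (if ((fibF Ω i x).card : ℝ) ≤ v₀ then (1 : ℝ) else v₀) := by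
          rw [Finset.prod_ite, Finset.prod_const_one, one_mul, Finset.prod_const]
      _ ≤ ∏ x ∈ Ω, ((fibF Ω i x).card : ℝ) := by
          refine Finset.prod_le_prod (fun x _ => ?_) (fun x hx => ?_)
          · split <;> positivity
          · have hxfib : (1 : ℝ) ≤ ((fibF Ω i x).card : ℝ) := by
              exact_mod_cast fibF_card_pos hx
            split
            · exact hxfib
            · next hb => exact (not_le.1 hb).le
  have hhan := han (H := H) Finset.univ Ω
  have hBbound : v₀ ^ B ≤ ((N : ℝ)) ^ N := by
    calc v₀ ^ B
        = ∏ i : I, v₀ ^ (Ω.filter fun x => ¬ ((fibF Ω i x).card : ℝ) ≤ v₀).card := by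
          rw [hB, ← Finset.prod_pow_eq_pow_sum]
      _ ≤ ∏ i : I, ∏ x ∈ Ω, ((fibF Ω i x).card : ℝ) := by
          exact Finset.prod_le_prod (fun i _ => by positivity) (fun i _ => hprod_i i)
      _ ≤ ((N : ℝ)) ^ N := hhan
  have hNv : (N : ℝ) ≤ 2⁻¹ * v₀ ^ ((n : ℝ) / 2) := le_trans hcard hv
  have hBle : (B : ℝ) ≤ (n : ℝ) / 2 * N := by
    have h1 : ((N : ℝ)) ^ N ≤ (v₀ ^ ((n : ℝ) / 2)) ^ N := by
      calc ((N : ℝ)) ^ N ≤ (2⁻¹ * v₀ ^ ((n : ℝ) / 2)) ^ N :=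
            pow_le_pow_left₀ (Nat.cast_nonneg N) hNv N
        _ ≤ (v₀ ^ ((n : ℝ) / 2)) ^ N := by
            refine pow_le_pow_left₀ (by positivity) ?_ N
            nlinarith [Real.rpow_nonneg hv₀pos.le ((n : ℝ) / 2)]
    have h2 : (v₀ ^ ((n : ℝ) / 2)) ^ N = v₀ ^ ((n : ℝ) / 2 * N) := by
      rw [← Real.rpow_natCast (v₀ ^ ((n : ℝ) / 2)) N, ← Real.rpow_mul hv₀pos.le]
    have h3 : v₀ ^ ((B : ℕ) : ℝ) ≤ v₀ ^ ((n : ℝ) / 2 * N) := by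
      rw [Real.rpow_natCast]
      exact le_trans hBbound (by rw [← h2]; exact h1)
    exact (Real.rpow_le_rpow_left_iff hv₀).1 h3
  -- the total count of small-fiber points
  have hsplit : ∀ i : I, ((Ω.filter fun x => ((fibF Ω i x).card : ℝ) ≤ v₀).card : ℝ)
      = (N : ℝ) - ((Ω.filter fun x => ¬ ((fibF Ω i x).card : ℝ) ≤ v₀).card : ℝ) := by
    intro i
    have := Finset.card_filter_add_card_filter_not
      (s := Ω) (p := fun x => ((fibF Ω i x).card : ℝ) ≤ v₀)
    have h4 : ((Ω.filter fun x => ((fibF Ω i x).card : ℝ) ≤ v₀).card : ℝ)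
        + ((Ω.filter fun x => ¬ ((fibF Ω i x).card : ℝ) ≤ v₀).card : ℝ) = (N : ℝ) := by
      exact_mod_cast this
    linarith
  have hcount : (n : ℝ) / 2 * N
      ≤ ∑ i : I, ((Ω.filter fun x => ((fibF Ω i x).card : ℝ) ≤ v₀).card : ℝ) := by
    have : ∑ i : I, ((Ω.filter fun x => ((fibF Ω i x).card : ℝ) ≤ v₀).card : ℝ)
        = (n : ℝ) * N - (B : ℝ) := by
      rw [Finset.sum_congr rfl fun i _ => hsplit i, Finset.sum_sub_distrib,
        Finset.sum_const, hB]
      push_cast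
      simp [hn, mul_comm]
    rw [this]
    linarith
  -- assemble
  rw [bw_decomp η hη.2.2.summable Ω]
  have hTs : s * ((n : ℝ) / 2 * N) ≤ ∑ i : I, ∑ x ∈ Ω, TF η Ω i x := by
    calc s * ((n : ℝ) / 2 * N)
        ≤ s * ∑ i : I, ((Ω.filter fun x => ((fibF Ω i x).card : ℝ) ≤ v₀).card : ℝ) :=
          mul_le_mul_of_nonneg_left hcount hs.le
      _ = ∑ i : I, s * ((Ω.filter fun x => ((fibF Ω i x).card : ℝ) ≤ v₀).card : ℝ) :=
          Finset.mul_sum _ _ _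
      _ ≤ ∑ i : I, ∑ x ∈ Ω, TF η Ω i x :=
          Finset.sum_le_sum fun i _ => sum_TF_ge η hpos hs.le hL Ω i
  have hnposR : (0 : ℝ) < (n : ℝ) := by exact_mod_cast hnpos
  calc s / 2 = (N : ℝ)⁻¹ * ((n : ℝ)⁻¹ * (s * ((n : ℝ) / 2 * N))) := by
        field_simp
    _ ≤ (N : ℝ)⁻¹ * ((n : ℝ)⁻¹ * ∑ i : I, ∑ x ∈ Ω, TF η Ω i x) := by
        refine mul_le_mul_of_nonneg_left (mul_le_mul_of_nonneg_left hTs ?_) ?_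
        · positivity
        · positivity

end Slices

end IsoAux

theorem statement0 :
    ∃ C₁ : ℝ, 1 ≤ C₁ ∧
      ∀ (I : Type) [Fintype I], Nonempty I →
        ∀ (H : Type) [Group H], Countable H →
          ∀ η : H → ℝ, IsSymmProb η →
            ∀ v₀ s : ℝ, 0 < v₀ → 0 < s → s ≤ 1 / 2 → s < lambdaOne η v₀ →
              ∀ v : ℝ, 1 ≤ v → v ≤ C₁⁻¹ * v₀ ^ ((Fintype.card I : ℝ) / C₁) →
                s / C₁ ≤ lambdaOne (prodMeasure I H η) v := by
  refine ⟨2, one_le_two, ?_⟩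
  intro I _ hI H _ _ η hη v₀ s hv₀pos hs _ hL v hv1 hv2
  have hv₀ : 1 < v₀ := by
    by_contra hc
    push_neg at hc
    have h1 : v₀ ^ ((Fintype.card I : ℝ) / 2) ≤ 1 :=
      Real.rpow_le_one hv₀pos.le hc (by positivity)
    have h2 : (1 : ℝ) ≤ 2⁻¹ * v₀ ^ ((Fintype.card I : ℝ) / 2) := le_trans hv1 hv2
    nlinarith
  refine le_csInf ?_ ?_
  · refine ⟨(({1} : Finset (I → H)).card : ℝ)⁻¹ *
      boundaryWeight (prodMeasure I H η) {1}, {1}, ⟨Finset.singleton_nonempty _, ?_⟩, rfl⟩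
    simpa using hv1
  · rintro r ⟨Ω, ⟨hne, hcard⟩, rfl⟩
    exact IsoAux.main_bound η hI hη hs hL hv₀ hv2 Ω hne hcard
end

section
/- Let Γ and H be finitely generated groups with finite symmetric generating sets, Γ acting on a set X with Schreier graph 𝒮 of a basepoint o. Let 𝔮 = (1/2)(u_{Γ,1} + u_{H,1}) on G = H ≀_𝒮 Γ, where u_{Γ,1} and u_{H,1} are the uniform probability measures on the balls of radius 1 in Γ and in H, viewed in G via the natural embeddings γ ↦ (e, γ) and h ↦ (1_h^o, e_Γ). For each r ≥ 1 let η_r be a symmetric probability measure on H supported in the ball B_H(e_H, r). Then there exists a constant C such that, for all r ≥ 1, Λ₁,G,𝔮(v) ≥ 1/(Cr) for every v ≤ C⁻¹ · (v_r)^{|B_𝒮(o,r)|/C}, where v_r = sup{ v₀ : Λ₁,H,η_r(v₀) > 1/2 } and B_𝒮(o,r) is the ball of radius r about o in the Schreier graph 𝒮. -/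
open scoped Pointwise

open Paper

open scoped Pointwise

section AuxEntropy

private lemma aux_core_count {α : Type*} (S : Finset α) (T Q : α → Finset α)
    (hTsub : ∀ a ∈ S, T a ⊆ S) (hQsub : ∀ a ∈ S, Q a ⊆ S)
    (hrt : ∀ a ∈ S, a ∈ T a) (hrq : ∀ a ∈ S, a ∈ Q a)
    (huniq : ∀ a ∈ S, ∀ a' ∈ S, ∀ b c, b ∈ T a → c ∈ Q a → b ∈ T a' → c ∈ Q a' → a = a') :
    ∑ a ∈ S, (Real.log (T a).card + Real.log (Q a).card)
      ≤ (S.card : ℝ) * Real.log S.card := by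
  classical
  rcases S.eq_empty_or_nonempty with rfl | hSne
  · simp
  have hS0 : (0:ℝ) < S.card := by exact_mod_cast Finset.card_pos.2 hSne
  have hcardT : ∀ a ∈ S, ((T a).card : ℝ) = ∑ b ∈ S, (if b ∈ T a then (1:ℝ) else 0) := by
    intro a ha
    rw [Finset.sum_boole]
    congr 2
    ext b
    simp only [Finset.mem_filter]
    exact ⟨fun h => ⟨hTsub a ha h, h⟩, fun h => h.2⟩
  have hcardQ : ∀ a ∈ S, ((Q a).card : ℝ) = ∑ c ∈ S, (if c ∈ Q a then (1:ℝ) else 0) := by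
    intro a ha
    rw [Finset.sum_boole]
    congr 2
    ext c
    simp only [Finset.mem_filter]
    exact ⟨fun h => ⟨hQsub a ha h, h⟩, fun h => h.2⟩
  -- counting inequality
  have hsum : ∑ a ∈ S, ((T a).card : ℝ) * ((Q a).card : ℝ) ≤ (S.card : ℝ) * S.card := by
    calc ∑ a ∈ S, ((T a).card : ℝ) * ((Q a).card : ℝ)
        = ∑ a ∈ S, ∑ b ∈ S, ∑ c ∈ S,
            (if b ∈ T a then (1:ℝ) else 0) * (if c ∈ Q a then (1:ℝ) else 0) := by
          refine Finset.sum_congr rfl fun a ha => ?_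
          rw [hcardT a ha, hcardQ a ha, Finset.sum_mul_sum]
      _ = ∑ b ∈ S, ∑ c ∈ S, ∑ a ∈ S,
            (if b ∈ T a then (1:ℝ) else 0) * (if c ∈ Q a then (1:ℝ) else 0) := by
          rw [Finset.sum_comm]
          exact Finset.sum_congr rfl fun b _ => Finset.sum_comm
      _ ≤ ∑ _b ∈ S, ∑ _c ∈ S, (1:ℝ) := by
          refine Finset.sum_le_sum fun b hb => Finset.sum_le_sum fun c hc => ?_
          have heq : ∑ a ∈ S, (if b ∈ T a then (1:ℝ) else 0) * (if c ∈ Q a then (1:ℝ) else 0)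
              = ((S.filter (fun a => b ∈ T a ∧ c ∈ Q a)).card : ℝ) := by
            rw [Finset.card_filter]
            push_cast
            refine Finset.sum_congr rfl fun a _ => ?_
            by_cases h1 : b ∈ T a <;> by_cases h2 : c ∈ Q a <;> simp [h1, h2]
          rw [heq]
          have hle : (S.filter (fun a => b ∈ T a ∧ c ∈ Q a)).card ≤ 1 := by
            refine Finset.card_le_one.2 fun a ha a' ha' => ?_
            simp only [Finset.mem_filter] at ha ha'
            exact huniq a ha.1 a' ha'.1 b c ha.2.1 ha.2.2 ha'.2.1 ha'.2.2
          exact_mod_cast hle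
      _ = (S.card : ℝ) * S.card := by simp [mul_comm]
  -- per-element log bound
  have hper : ∀ a ∈ S, Real.log (T a).card + Real.log (Q a).card
      ≤ Real.log S.card + ((T a).card : ℝ) * ((Q a).card : ℝ) / S.card - 1 := by
    intro a ha
    have hT : (0:ℝ) < (T a).card := by
      exact_mod_cast Finset.card_pos.2 ⟨a, hrt a ha⟩
    have hQ : (0:ℝ) < (Q a).card := by
      exact_mod_cast Finset.card_pos.2 ⟨a, hrq a ha⟩
    have hpos : (0:ℝ) < ((T a).card : ℝ) * ((Q a).card : ℝ) / S.card :=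
      div_pos (mul_pos hT hQ) hS0
    have hlog := Real.log_le_sub_one_of_pos hpos
    rw [Real.log_div (by positivity) (ne_of_gt hS0), Real.log_mul (ne_of_gt hT) (ne_of_gt hQ)]
      at hlog
    linarith
  calc ∑ a ∈ S, (Real.log (T a).card + Real.log (Q a).card)
      ≤ ∑ a ∈ S, (Real.log S.card + ((T a).card : ℝ) * ((Q a).card : ℝ) / S.card - 1) :=
        Finset.sum_le_sum hper
    _ = (S.card : ℝ) * Real.log S.card
          + (∑ a ∈ S, ((T a).card : ℝ) * ((Q a).card : ℝ)) / S.card - S.card := by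
        rw [Finset.sum_sub_distrib, Finset.sum_add_distrib, ← Finset.sum_div]
        simp [mul_comm]
    _ ≤ (S.card : ℝ) * Real.log S.card + ((S.card : ℝ) * S.card) / S.card - S.card := by
        gcongr
    _ = (S.card : ℝ) * Real.log S.card := by field_simp; ring

section T
open Classical in
private lemma aux_erasure_filter {α W H' X : Type*} (B : Finset X) :
    ∀ (S : Finset α) (w : α → W) (κ : X → α → H'),
      (∀ a ∈ S, ∀ b ∈ S, w a = w b → (∀ x ∈ B, κ x a = κ x b) → a = b) →
      ∑ x ∈ B, ∑ a ∈ S,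
          Real.log ((S.filter (fun b => w b = w a ∧ ∀ y ∈ B, y ≠ x → κ y b = κ y a)).card)
        ≤ (S.card : ℝ) * Real.log S.card := by
  classical
  induction B using Finset.induction_on with
  | empty =>
      intro S w κ _
      simp only [Finset.sum_empty]
      rcases Nat.eq_zero_or_pos S.card with h | h
      · simp [h]
      · exact mul_nonneg (Nat.cast_nonneg _) (Real.log_natCast_nonneg _)
  | @insert z B' hz IH =>
      intro S w κ hinj
      rw [Finset.sum_insert hz]
      -- notation
      set T : α → Finset α := fun a => S.filter (fun b => κ z b = κ z a) with hT
      set Q : α → Finset α := fun a =>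
        S.filter (fun b => w b = w a ∧ ∀ y ∈ B', κ y b = κ y a) with hQ
      -- the z-term is the Q-term
      have hzterm : ∀ a ∈ S,
          (S.filter (fun b => w b = w a ∧ ∀ y ∈ insert z B', y ≠ z → κ y b = κ y a))
            = Q a := by
        intro a _
        refine Finset.filter_congr fun b _ => ?_
        constructor
        · rintro ⟨h1, h2⟩
          exact ⟨h1, fun y hy => h2 y (Finset.mem_insert_of_mem hy)
            (fun hyz => hz (hyz ▸ hy))⟩
        · rintro ⟨h1, h2⟩
          refine ⟨h1, fun y hy hyz => ?_⟩
          rcases Finset.mem_insert.1 hy with rfl | hy'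
          · exact absurd rfl hyz
          · exact h2 y hy'
      -- the other terms: restrict to κ z fibers
      have hmain : ∑ x ∈ B', ∑ a ∈ S,
          Real.log ((S.filter
            (fun b => w b = w a ∧ ∀ y ∈ insert z B', y ≠ x → κ y b = κ y a)).card)
          ≤ ∑ a ∈ S, Real.log ((T a).card) := by
        -- rewrite each inner fib as a fiber within T a
        have hfib : ∀ x ∈ B', ∀ a ∈ S,
            (S.filter (fun b => w b = w a ∧ ∀ y ∈ insert z B', y ≠ x → κ y b = κ y a))
            = (T a).filter (fun b => w b = w a ∧ ∀ y ∈ B', y ≠ x → κ y b = κ y a) := by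
          intro x hx a _
          rw [hT, Finset.filter_filter]
          refine Finset.filter_congr fun b _ => ?_
          have hzx : z ≠ x := fun h => hz (h ▸ hx)
          constructor
          · rintro ⟨h1, h2⟩
            exact ⟨h2 z (Finset.mem_insert_self _ _) hzx,
              h1, fun y hy hyx => h2 y (Finset.mem_insert_of_mem hy) hyx⟩
          · rintro ⟨h0, h1, h2⟩
            refine ⟨h1, fun y hy hyx => ?_⟩
            rcases Finset.mem_insert.1 hy with rfl | hy'
            · exact h0
            · exact h2 y hy' hyx
        -- partition S over values of κ z
        have hpart : ∀ (F : α → ℝ), ∑ a ∈ S, F a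
            = ∑ h ∈ S.image (κ z), ∑ a ∈ S.filter (fun a => κ z a = h), F a := by
          intro F
          exact (Finset.sum_fiberwise_of_maps_to (fun a ha => Finset.mem_image_of_mem _ ha) F).symm
        calc ∑ x ∈ B', ∑ a ∈ S, Real.log ((S.filter
              (fun b => w b = w a ∧ ∀ y ∈ insert z B', y ≠ x → κ y b = κ y a)).card)
            = ∑ x ∈ B', ∑ h ∈ S.image (κ z), ∑ a ∈ S.filter (fun a => κ z a = h),
                Real.log (((S.filter (fun a => κ z a = h)).filter
                  (fun b => w b = w a ∧ ∀ y ∈ B', y ≠ x → κ y b = κ y a)).card) := by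
              refine Finset.sum_congr rfl fun x hx => ?_
              rw [hpart (fun a => Real.log ((S.filter
                (fun b => w b = w a ∧ ∀ y ∈ insert z B', y ≠ x → κ y b = κ y a)).card : ℝ))]
              refine Finset.sum_congr rfl fun h hh => Finset.sum_congr rfl fun a ha => ?_
              have ha' := Finset.mem_filter.1 ha
              rw [hfib x hx a ha'.1]
              have hTa : T a = S.filter (fun a' => κ z a' = h) := by
                rw [hT]
                exact Finset.filter_congr fun b _ => by rw [ha'.2]
              rw [hTa]
          _ = ∑ h ∈ S.image (κ z), ∑ x ∈ B', ∑ a ∈ S.filter (fun a => κ z a = h),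
                Real.log (((S.filter (fun a => κ z a = h)).filter
                  (fun b => w b = w a ∧ ∀ y ∈ B', y ≠ x → κ y b = κ y a)).card) :=
              Finset.sum_comm
          _ ≤ ∑ h ∈ S.image (κ z), ((S.filter (fun a => κ z a = h)).card : ℝ)
                * Real.log ((S.filter (fun a => κ z a = h)).card) := by
              refine Finset.sum_le_sum fun h _ => ?_
              refine IH (S.filter (fun a => κ z a = h)) w κ ?_
              intro a ha b hb hw hκ
              have ha' := Finset.mem_filter.1 ha
              have hb' := Finset.mem_filter.1 hb
              refine hinj a ha'.1 b hb'.1 hw fun x hx => ?_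
              rcases Finset.mem_insert.1 hx with rfl | hx'
              · rw [ha'.2, hb'.2]
              · exact hκ x hx'
          _ = ∑ a ∈ S, Real.log ((T a).card) := by
              rw [hpart (fun a => Real.log ((T a).card : ℝ))]
              refine Finset.sum_congr rfl fun h _ => ?_
              have hTa : ∀ a ∈ S.filter (fun a => κ z a = h),
                  T a = S.filter (fun a => κ z a = h) := by
                intro a ha
                have ha' := Finset.mem_filter.1 ha
                rw [hT]
                exact Finset.filter_congr fun b _ => by rw [ha'.2]
              rw [Finset.sum_congr rfl (fun a ha => by rw [hTa a ha] :
                ∀ a ∈ S.filter (fun a => κ z a = h), Real.log ((T a).card : ℝ)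
                  = Real.log ((S.filter (fun a => κ z a = h)).card : ℝ))]
              rw [Finset.sum_const, nsmul_eq_mul]
      -- combine with the two-partition bound
      have hcore := aux_core_count S T Q
        (fun a _ => Finset.filter_subset _ _) (fun a _ => Finset.filter_subset _ _)
        (fun a ha => by rw [hT]; exact Finset.mem_filter.2 ⟨ha, rfl⟩)
        (fun a ha => by rw [hQ]; exact Finset.mem_filter.2 ⟨ha, rfl, fun _ _ => rfl⟩)
        ?uniq
      case uniq =>
        intro a ha a' ha' b c htb hqc htb' hqc'
        rw [hT] at htb htb'
        rw [hQ] at hqc hqc'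
        have htb := (Finset.mem_filter.1 htb).2
        have htb' := (Finset.mem_filter.1 htb').2
        have hqc := (Finset.mem_filter.1 hqc).2
        have hqc' := (Finset.mem_filter.1 hqc').2
        refine hinj a ha a' ha' (hqc.1.symm.trans hqc'.1) fun x hx => ?_
        rcases Finset.mem_insert.1 hx with rfl | hx'
        · rw [← htb, ← htb']
        · rw [← hqc.2 x hx', ← hqc'.2 x hx']
      have hsum2 : (∑ a ∈ S, Real.log ((T a).card)) + ∑ a ∈ S, Real.log ((Q a).card)
          ≤ (S.card : ℝ) * Real.log S.card := by
        rw [← Finset.sum_add_distrib]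
        exact hcore
      have h1 : ∑ a ∈ S, Real.log ((S.filter (fun b => w b = w a ∧
          ∀ y ∈ insert z B', y ≠ z → κ y b = κ y a)).card)
          = ∑ a ∈ S, Real.log ((Q a).card) :=
        Finset.sum_congr rfl fun a ha => by rw [hzterm a ha]
      rw [h1]
      linarith [hmain, hsum2]
end T

open Classical in
private lemma aux_erasure {α W H' X : Type*} (B : Finset X) (S : Finset α) (w : α → W)
    (κ : X → α → H') (fib : X → α → Finset α)
    (hfib : ∀ x a b, b ∈ fib x a ↔ (b ∈ S ∧ w b = w a ∧ ∀ y ∈ B, y ≠ x → κ y b = κ y a))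
    (hinj : ∀ a ∈ S, ∀ b ∈ S, w a = w b → (∀ x ∈ B, κ x a = κ x b) → a = b) :
    ∑ x ∈ B, ∑ a ∈ S, Real.log ((fib x a).card) ≤ (S.card : ℝ) * Real.log S.card := by
  have h2 := aux_erasure_filter B S w κ hinj
  refine le_trans (le_of_eq ?_) h2
  refine Finset.sum_congr rfl fun x _ => Finset.sum_congr rfl fun a _ => ?_
  exact congrArg (fun n : ℕ => Real.log n)
    (congrArg Finset.card (Finset.ext fun b => by rw [hfib, Finset.mem_filter]))

private lemma aux_markov {α : Type*} (S : Finset α) (fib : α → Finset α)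
    (hsub : ∀ a ∈ S, fib a ⊆ S) (hrefl : ∀ a ∈ S, a ∈ fib a)
    (hcl : ∀ a ∈ S, ∀ b ∈ fib a, fib b = fib a)
    (e : α → ℝ) (he : ∀ a ∈ S, 0 ≤ e a) (t : ℝ)
    (hfib : ∀ a ∈ S, ((fib a).card : ℝ) < t → ((fib a).card : ℝ) / 2 < ∑ b ∈ fib a, e b) :
    ∑ a ∈ S, (if ((fib a).card : ℝ) < t then (1:ℝ) else 0) ≤ 2 * ∑ a ∈ S, e a := by
  classical
  have hNpos : ∀ a ∈ S, (0:ℝ) < (fib a).card := by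
    intro a ha
    exact_mod_cast Finset.card_pos.2 ⟨a, hrefl a ha⟩
  have hsym : ∀ a ∈ S, ∀ b ∈ S, (b ∈ fib a ↔ a ∈ fib b) := by
    intro a ha b hb
    constructor
    · intro h; rw [hcl a ha b h]; exact hrefl a ha
    · intro h; rw [hcl b hb a h]; exact hrefl b hb
  -- class-sum identity
  have hid : ∑ a ∈ S, (∑ b ∈ fib a, e b) / (fib a).card = ∑ a ∈ S, e a := by
    have h1 : ∀ a ∈ S, (∑ b ∈ fib a, e b) / (fib a).card
        = ∑ b ∈ S, (if b ∈ fib a then e b / (fib a).card else 0) := by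
      intro a ha
      rw [Finset.sum_ite_mem, Finset.inter_eq_right.2 (hsub a ha), Finset.sum_div]
    calc ∑ a ∈ S, (∑ b ∈ fib a, e b) / (fib a).card
        = ∑ a ∈ S, ∑ b ∈ S, (if b ∈ fib a then e b / (fib a).card else 0) :=
          Finset.sum_congr rfl h1
      _ = ∑ b ∈ S, ∑ a ∈ S, (if b ∈ fib a then e b / (fib a).card else 0) := Finset.sum_comm
      _ = ∑ b ∈ S, e b := by
          refine Finset.sum_congr rfl fun b hb => ?_
          have h2 : ∀ a ∈ S, (if b ∈ fib a then e b / (fib a).card else 0)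
              = (if a ∈ fib b then e b / (fib b).card else 0) := by
            intro a ha
            by_cases h : b ∈ fib a
            · rw [if_pos h, if_pos ((hsym a ha b hb).1 h), hcl a ha b h]
            · rw [if_neg h, if_neg (fun h' => h ((hsym b hb a ha).1 h'))]
          rw [Finset.sum_congr rfl h2, Finset.sum_ite_mem,
            Finset.inter_eq_right.2 (hsub b hb), Finset.sum_const, nsmul_eq_mul]
          rw [div_eq_mul_inv]
          rw [← mul_assoc, mul_comm ((fib b).card : ℝ) (e b), mul_assoc,
            mul_inv_cancel₀ (ne_of_gt (hNpos b hb)), mul_one]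
  -- pointwise bound
  have hpt : ∀ a ∈ S, (if ((fib a).card : ℝ) < t then (1:ℝ) else 0)
      ≤ 2 * ((∑ b ∈ fib a, e b) / (fib a).card) := by
    intro a ha
    by_cases h : ((fib a).card : ℝ) < t
    · rw [if_pos h]
      have h2 := hfib a ha h
      rw [← mul_div_assoc, le_div_iff₀ (hNpos a ha), one_mul]
      linarith
    · rw [if_neg h]
      have : 0 ≤ ∑ b ∈ fib a, e b :=
        Finset.sum_nonneg fun b hbf => he b (hsub a ha hbf)
      positivity
  calc ∑ a ∈ S, (if ((fib a).card : ℝ) < t then (1:ℝ) else 0)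
      ≤ ∑ a ∈ S, 2 * ((∑ b ∈ fib a, e b) / (fib a).card) := Finset.sum_le_sum hpt
    _ = 2 * ∑ a ∈ S, (∑ b ∈ fib a, e b) / (fib a).card := by rw [Finset.mul_sum]
    _ = 2 * ∑ a ∈ S, e a := by rw [hid]

section AuxPaper

open Paper

private lemma aux_unifOn_nonneg {β : Type*} (A : Set β) (g : β) : 0 ≤ unifOn A g :=
  Set.indicator_nonneg (fun _ _ => inv_nonneg.2 (Nat.cast_nonneg _)) g

private lemma aux_bw_nonneg {G : Type*} [Group G] {φ : G → ℝ} (hφ : ∀ g, 0 ≤ φ g)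
    (Ω : Finset G) : 0 ≤ boundaryWeight φ Ω :=
  Finset.sum_nonneg fun _ _ => tsum_nonneg fun y =>
    Set.indicator_nonneg (fun g _ => hφ g) y

private lemma aux_lambda_bddBelow {G : Type*} [Group G] {φ : G → ℝ} (hφ : ∀ g, 0 ≤ φ g)
    (v : ℝ) :
    BddBelow ((fun Ω : Finset G => (Ω.card : ℝ)⁻¹ * boundaryWeight φ Ω) ''
      {Ω : Finset G | Ω.Nonempty ∧ (Ω.card : ℝ) ≤ v}) := by
  refine ⟨0, ?_⟩
  rintro x ⟨Ω, -, rfl⟩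
  exact mul_nonneg (inv_nonneg.2 (Nat.cast_nonneg _)) (aux_bw_nonneg hφ Ω)

private lemma aux_lambda_le {G : Type*} [Group G] {φ : G → ℝ} (hφ : ∀ g, 0 ≤ φ g)
    {Ω : Finset G} {v : ℝ} (h1 : Ω.Nonempty) (h2 : (Ω.card : ℝ) ≤ v) :
    lambdaOne φ v ≤ (Ω.card : ℝ)⁻¹ * boundaryWeight φ Ω :=
  csInf_le (aux_lambda_bddBelow hφ v) ⟨Ω, ⟨h1, h2⟩, rfl⟩

private lemma aux_lambda_anti {G : Type*} [Group G] {φ : G → ℝ} (hφ : ∀ g, 0 ≤ φ g)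
    {v v' : ℝ} (h1 : 1 ≤ v) (h12 : v ≤ v') : lambdaOne φ v' ≤ lambdaOne φ v := by
  refine csInf_le_csInf (aux_lambda_bddBelow hφ v') ?_ ?_
  · exact ⟨_, ⟨({1} : Finset G), ⟨Finset.singleton_nonempty _, by simpa using h1⟩, rfl⟩⟩
  · rintro x ⟨Ω, ⟨hne, hc⟩, rfl⟩
    exact ⟨Ω, ⟨hne, hc.trans h12⟩, rfl⟩

private lemma aux_le_lambda {G : Type*} [Group G] {φ : G → ℝ} {v c : ℝ} (hv : 1 ≤ v)
    (h : ∀ Ω : Finset G, Ω.Nonempty → (Ω.card : ℝ) ≤ v →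
      c ≤ (Ω.card : ℝ)⁻¹ * boundaryWeight φ Ω) :
    c ≤ lambdaOne φ v := by
  refine le_csInf ⟨_, ⟨({1} : Finset G),
    ⟨Finset.singleton_nonempty _, by simpa using hv⟩, rfl⟩⟩ ?_
  rintro x ⟨Ω, ⟨hne, hc⟩, rfl⟩
  exact h Ω hne hc

private lemma aux_lambda_zero_of_lt_one {G : Type*} [Group G] (φ : G → ℝ) {v : ℝ}
    (hv : v < 1) : lambdaOne φ v = 0 := by
  have hempty : {Ω : Finset G | Ω.Nonempty ∧ (Ω.card : ℝ) ≤ v} = ∅ := by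
    ext Ω
    simp only [Set.mem_setOf_eq, Set.mem_empty_iff_false, iff_false, not_and]
    intro hne hle
    have : (1:ℝ) ≤ (Ω.card : ℝ) := by exact_mod_cast Finset.card_pos.2 hne
    linarith
  rw [lambdaOne, hempty, Set.image_empty, Real.sInf_empty]

open Classical in
private noncomputable def escC {G : Type*} [Group G] (Ω : Finset G) (u : G) : ℕ :=
  (Ω.filter (fun g => g * u ∉ Ω)).card

private lemma aux_escC_mul {G : Type*} [Group G] (Ω : Finset G) (u v : G) :
    escC Ω (u * v) ≤ escC Ω u + escC Ω v := by
  classical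
  unfold escC
  have hsub : Ω.filter (fun g => g * (u * v) ∉ Ω)
      ⊆ Ω.filter (fun g => g * u ∉ Ω) ∪ Ω.filter (fun g => g * u ∈ Ω ∧ g * u * v ∉ Ω) := by
    intro g hg
    rw [Finset.mem_filter] at hg
    rw [Finset.mem_union, Finset.mem_filter, Finset.mem_filter]
    by_cases h : g * u ∈ Ω
    · exact Or.inr ⟨hg.1, h, by rw [mul_assoc]; exact hg.2⟩
    · exact Or.inl ⟨hg.1, h⟩
  refine le_trans (Finset.card_le_card hsub) ?_
  refine le_trans (Finset.card_union_le _ _) ?_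
  refine add_le_add le_rfl ?_
  refine Finset.card_le_card_of_injOn (fun g => g * u) ?_ ?_
  · intro g hg
    rw [Finset.mem_coe, Finset.mem_filter] at hg ⊢
    exact ⟨hg.2.1, hg.2.2⟩
  · intro g1 _ g2 _ h
    exact mul_right_cancel h

private lemma aux_escC_prod {G : Type*} [Group G] (Ω : Finset G) (c : ℝ) (hc : 0 ≤ c) :
    ∀ L : List G, (∀ u ∈ L, (escC Ω u : ℝ) ≤ c) → (escC Ω L.prod : ℝ) ≤ L.length * c := by
  classical
  intro L
  induction L with
  | nil =>
      intro _
      simp only [List.prod_nil, List.length_nil, Nat.cast_zero, zero_mul]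
      have : escC Ω (1 : G) = 0 := by
        unfold escC
        rw [Finset.card_eq_zero, Finset.filter_eq_empty_iff]
        intro g hg
        simp [hg]
      rw [this]
      simp
  | cons u L ih =>
      intro hL
      rw [List.prod_cons]
      have h1 := aux_escC_mul Ω u L.prod
      have h2 := ih fun u' hu' => hL u' (List.mem_cons_of_mem _ hu')
      have h3 := hL u (List.mem_cons_self)
      have : (escC Ω (u * L.prod) : ℝ) ≤ (escC Ω u : ℝ) + (escC Ω L.prod : ℝ) := by
        exact_mod_cast h1
      rw [List.length_cons]
      push_cast
      linarith

private lemma aux_mul_escC_le {G : Type*} [Group G] {φ : G → ℝ} (hnn : ∀ g, 0 ≤ φ g)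
    (hsum : Summable φ) (Ω : Finset G) (s : G) :
    φ s * (escC Ω s : ℝ) ≤ boundaryWeight φ Ω := by
  classical
  have hper : ∀ g ∈ Ω, (if g * s ∉ Ω then φ s else 0)
      ≤ ∑' y : G, Set.indicator {y | g * y ∉ Ω} φ y := by
    intro g _
    by_cases h : g * s ∈ Ω
    · rw [if_neg (by simpa using h)]
      exact tsum_nonneg fun y => Set.indicator_nonneg (fun z _ => hnn z) y
    · rw [if_pos h]
      have hle := Summable.le_tsum (hsum.indicator {y | g * y ∉ Ω}) s
        (fun y _ => Set.indicator_nonneg (fun z _ => hnn z) y)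
      rwa [Set.indicator_of_mem (by simpa using h)] at hle
  calc φ s * (escC Ω s : ℝ) = ∑ g ∈ Ω, (if g * s ∉ Ω then φ s else 0) := by
        rw [Finset.sum_ite, Finset.sum_const, Finset.sum_const_zero, add_zero,
          nsmul_eq_mul, mul_comm]
        rfl
    _ ≤ ∑ g ∈ Ω, ∑' y : G, Set.indicator {y | g * y ∉ Ω} φ y := Finset.sum_le_sum hper
    _ = boundaryWeight φ Ω := rfl

private lemma aux_wordBall_finite {G : Type*} [Group G] {S : Set G} (hS : S.Finite) :
    ∀ r : ℕ, (wordBall S r).Finite := by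
  intro r
  induction r with
  | zero =>
      refine Set.Finite.subset (Set.finite_singleton (1 : G)) ?_
      rintro g ⟨L, _, hlen, hprod⟩
      rw [Nat.le_zero] at hlen
      rw [List.length_eq_zero_iff] at hlen
      subst hlen
      simp at hprod
      simp [← hprod]
  | succ r ih =>
      refine Set.Finite.subset ((ih.union (hS.mul ih))) ?_
      rintro g ⟨L, hLS, hlen, hprod⟩
      cases L with
      | nil =>
          simp only [List.prod_nil] at hprod
          exact Or.inl ⟨[], by simp, by simp, hprod⟩
      | cons s L' =>
          right
          rw [List.prod_cons] at hprod
          refine ⟨s, hLS s (List.mem_cons_self), L'.prod, ?_, hprod⟩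
          exact ⟨L', fun u hu => hLS u (List.mem_cons_of_mem _ hu),
            by simpa using Nat.le_of_succ_le_succ (by simpa using hlen), rfl⟩

private lemma aux_schreierBall_finite {Γ : Type*} {X : Type*} [Group Γ] [MulAction Γ X]
    {S : Set Γ} (hS : S.Finite) (o : X) (r : ℕ) : (schreierBall S o r).Finite := by
  refine Set.Finite.subset ((aux_wordBall_finite hS r).image (fun g => g • o)) ?_
  rintro y ⟨L, hLS, hlen, hprod⟩
  exact ⟨L.prod, ⟨L, hLS, hlen, rfl⟩, hprod⟩

end AuxPaper


private lemma aux_arith {K r c : ℝ} (hK : 0 < K) (hr : 0 < r) :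
    3 * r * (K * (c / (12 * K * r))) = c / 4 := by
  field_simp
  ring

set_option maxHeartbeats 4000000 in
theorem statement2
    (Γ : Type) [Group Γ] (SΓ : Finset Γ) (hSΓsym : ∀ s ∈ SΓ, s⁻¹ ∈ SΓ)
    (hSΓgen : Subgroup.closure (SΓ : Set Γ) = ⊤)
    (H : Type) [Group H] (SH : Finset H) (hSHsym : ∀ s ∈ SH, s⁻¹ ∈ SH)
    (hSHgen : Subgroup.closure (SH : Set H) = ⊤)
    (X : Type) [MulAction Γ X] (o : X) (htrans : ∀ x : X, ∃ g : Γ, g • o = x)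
    (η : ℕ → H → ℝ) (hη : ∀ r, IsSymmProb (η r))
    (hηsupp : ∀ r : ℕ, ∀ h : H, η r h ≠ 0 → h ∈ wordBall (SH : Set H) r) :
    ∃ C : ℝ, 1 ≤ C ∧ ∀ r : ℕ, 1 ≤ r → ∀ v : ℝ, 1 ≤ v →
      v ≤ C⁻¹ * (sSup {v₀ : ℝ | 1 / 2 < lambdaOne (η r) v₀}) ^
        (((schreierBall (SΓ : Set Γ) o r).ncard : ℝ) / C) →
      1 / (C * r) ≤
        lambdaOne (fun g : PWreath Γ X H =>
          (1 / 2) * unifOn ((fun γ : Γ => (SemidirectProduct.inr γ : PWreath Γ X H)) ''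
            (insert (1 : Γ) (SΓ : Set Γ))) g +
          (1 / 2) * unifOn ((fun h : H =>
              (SemidirectProduct.inl (lampAt X H o h) : PWreath Γ X H)) ''
            (insert (1 : H) (SH : Set H))) g) v := by
  classical
  -- constants
  set KΓ : ℕ := (insert (1:Γ) SΓ).card with hKΓdef
  set KH : ℕ := (insert (1:H) SH).card with hKHdef
  set K : ℝ := 2 * ((KΓ : ℝ) + (KH : ℝ)) with hKdef
  have hKΓ1 : 1 ≤ KΓ := Finset.card_pos.2 ⟨1, Finset.mem_insert_self _ _⟩
  have hKH1 : 1 ≤ KH := Finset.card_pos.2 ⟨1, Finset.mem_insert_self _ _⟩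
  have hKΓ1' : (1:ℝ) ≤ (KΓ:ℝ) := by exact_mod_cast hKΓ1
  have hKH1' : (1:ℝ) ≤ (KH:ℝ) := by exact_mod_cast hKH1
  have hK4 : (4:ℝ) ≤ K := by rw [hKdef]; linarith
  have hK0 : (0:ℝ) < K := by linarith
  set C : ℝ := 12 * K with hCdef
  have hC48 : (48:ℝ) ≤ C := by rw [hCdef]; linarith
  have hC0 : (0:ℝ) < C := by linarith
  refine ⟨C, by linarith, ?_⟩
  intro r hr v hv hvle
  have hr1 : (1:ℝ) ≤ (r:ℝ) := by exact_mod_cast hr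
  have hr0 : (0:ℝ) < (r:ℝ) := by linarith
  obtain ⟨hηnn, hηsym, hηsum1⟩ := hη r
  have hηsummable : Summable (η r) := hηsum1.summable
  have hηtsum : ∑' h, η r h = 1 := hηsum1.tsum_eq
  set vr : ℝ := sSup {v₀ : ℝ | 1 / 2 < lambdaOne (η r) v₀} with hvrdef
  -- the measure
  set q : PWreath Γ X H → ℝ := fun g =>
    (1 / 2) * unifOn ((fun γ : Γ => (SemidirectProduct.inr γ : PWreath Γ X H)) ''
      (insert (1 : Γ) (SΓ : Set Γ))) g +
    (1 / 2) * unifOn ((fun h : H =>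
        (SemidirectProduct.inl (lampAt X H o h) : PWreath Γ X H)) ''
      (insert (1 : H) (SH : Set H))) g with hqdef
  -- degenerate case
  by_cases hvr1 : vr ≤ 1
  · exfalso
    have h0vr : 0 ≤ vr := by
      rcases Set.eq_empty_or_nonempty {v₀ : ℝ | 1 / 2 < lambdaOne (η r) v₀} with he | hne
      · rw [hvrdef, he, Real.sSup_empty]
      · by_cases hbdd : BddAbove {v₀ : ℝ | 1 / 2 < lambdaOne (η r) v₀}
        · obtain ⟨t, ht⟩ := hne
          have h1t : (1:ℝ) ≤ t := by
            by_contra hlt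
            push_neg at hlt
            rw [Set.mem_setOf_eq, aux_lambda_zero_of_lt_one (η r) hlt] at ht
            norm_num at ht
          exact le_trans (by linarith) (le_csSup hbdd ht)
        · rw [hvrdef, Real.sSup_of_not_bddAbove hbdd]
    have hle1 : vr ^ (((schreierBall (SΓ : Set Γ) o r).ncard : ℝ) / C) ≤ 1 :=
      Real.rpow_le_one h0vr hvr1 (by positivity)
    have hv2 : v ≤ C⁻¹ := by
      refine le_trans hvle ?_
      calc C⁻¹ * vr ^ (((schreierBall (SΓ : Set Γ) o r).ncard : ℝ) / C)
          ≤ C⁻¹ * 1 := by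
            exact mul_le_mul_of_nonneg_left hle1 (inv_nonneg.2 (le_of_lt hC0))
        _ = C⁻¹ := mul_one _
    have hCinv : C⁻¹ < 1 := by
      rw [inv_lt_one_iff₀]
      right
      linarith
    linarith
  push_neg at hvr1
  have hvr0 : (0:ℝ) < vr := by linarith
  have hTne : {v₀ : ℝ | 1 / 2 < lambdaOne (η r) v₀}.Nonempty := by
    by_contra hne
    rw [Set.not_nonempty_iff_eq_empty] at hne
    have : vr = 0 := by rw [hvrdef, hne, Real.sSup_empty]
    linarith
  have hTbdd : BddAbove {v₀ : ℝ | 1 / 2 < lambdaOne (η r) v₀} := by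
    by_contra hbdd
    have : vr = 0 := by rw [hvrdef]; exact Real.sSup_of_not_bddAbove hbdd
    linarith
  have hkey : ∀ u : ℝ, 1 ≤ u → u < vr → 1 / 2 < lambdaOne (η r) u := by
    intro u hu1 huvr
    obtain ⟨t, htT, hut⟩ := exists_lt_of_lt_csSup hTne (by rw [← hvrdef]; exact huvr)
    exact lt_of_lt_of_le htT (aux_lambda_anti hηnn hu1 hut.le)
  -- schreier ball
  have hBfin : (schreierBall (SΓ : Set Γ) o r).Finite :=
    aux_schreierBall_finite SΓ.finite_toSet o r
  set Bf : Finset X := hBfin.toFinset with hBfdef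
  have hncard : ((schreierBall (SΓ : Set Γ) o r).ncard : ℝ) = (Bf.card : ℝ) := by
    have h := Set.ncard_eq_toFinset_card _ hBfin
    rw [hBfdef]
    exact_mod_cast h
  -- facts about q
  have hqnn : ∀ g : PWreath Γ X H, 0 ≤ q g := fun g =>
    add_nonneg (mul_nonneg (by norm_num) (aux_unifOn_nonneg _ g))
      (mul_nonneg (by norm_num) (aux_unifOn_nonneg _ g))
  have hfinΓ : ((fun γ : Γ => (SemidirectProduct.inr γ : PWreath Γ X H)) ''
      (insert (1 : Γ) (SΓ : Set Γ))).Finite :=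
    ((SΓ.finite_toSet.insert 1).image _)
  have hfinH : ((fun h : H =>
      (SemidirectProduct.inl (lampAt X H o h) : PWreath Γ X H)) ''
      (insert (1 : H) (SH : Set H))).Finite :=
    ((SH.finite_toSet.insert 1).image _)
  have hqsummable : Summable q := by
    refine summable_of_finite_support (Set.Finite.subset (hfinΓ.union hfinH) ?_)
    refine le_trans (Function.support_add _ _) ?_
    refine Set.union_subset_union ?_ ?_
    · intro g hg
      by_contra hgm
      rw [Function.mem_support] at hg
      rw [unifOn, Set.indicator_of_notMem hgm, mul_zero] at hg
      exact hg rfl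
    · intro g hg
      by_contra hgm
      rw [Function.mem_support] at hg
      rw [unifOn, Set.indicator_of_notMem hgm, mul_zero] at hg
      exact hg rfl
  have hqΓ : ∀ γ ∈ insert (1:Γ) (SΓ : Set Γ), 1 / K ≤ q (SemidirectProduct.inr γ) := by
    intro γ hγ
    set A := (fun γ : Γ => (SemidirectProduct.inr γ : PWreath Γ X H)) ''
      (insert (1 : Γ) (SΓ : Set Γ)) with hAdef
    have hmem : (SemidirectProduct.inr γ : PWreath Γ X H) ∈ A := Set.mem_image_of_mem _ hγ
    have h1 : unifOn A (SemidirectProduct.inr γ) = ((A.ncard : ℝ))⁻¹ :=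
      Set.indicator_of_mem hmem _
    have hApos : 0 < A.ncard := by
      rw [Set.ncard_pos hfinΓ]
      exact ⟨_, hmem⟩
    have hAle : (A.ncard : ℝ) ≤ (KΓ : ℝ) := by
      have h2 : A.ncard ≤ KΓ := by
        refine le_trans (Set.ncard_image_le (SΓ.finite_toSet.insert 1)) ?_
        rw [hKΓdef, ← Finset.coe_insert, Set.ncard_coe_finset]
      exact_mod_cast h2
    have hA1 : (1:ℝ) ≤ (A.ncard : ℝ) := by exact_mod_cast hApos
    have h2 : 1 / K ≤ (1/2) * ((A.ncard : ℝ))⁻¹ := by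
      have hn0 : (0:ℝ) < (A.ncard : ℝ) := by linarith
      have h5 : (1:ℝ)/(2 * (A.ncard:ℝ)) = (1/2) * ((A.ncard : ℝ))⁻¹ := by
        rw [one_div, mul_inv]
        norm_num
      rw [hKdef, ← h5]
      apply one_div_le_one_div_of_le (by linarith)
      linarith
    refine le_trans h2 ?_
    have hqval : q (SemidirectProduct.inr γ)
        = (1/2) * unifOn A (SemidirectProduct.inr γ)
          + (1/2) * unifOn ((fun h : H =>
              (SemidirectProduct.inl (lampAt X H o h) : PWreath Γ X H)) ''
            (insert (1 : H) (SH : Set H))) (SemidirectProduct.inr γ) := rfl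
    rw [hqval, h1]
    have : 0 ≤ (1/2) * unifOn ((fun h : H =>
        (SemidirectProduct.inl (lampAt X H o h) : PWreath Γ X H)) ''
        (insert (1 : H) (SH : Set H))) (SemidirectProduct.inr γ) :=
      mul_nonneg (by norm_num) (aux_unifOn_nonneg _ _)
    linarith
  have hqH : ∀ h ∈ insert (1:H) (SH : Set H),
      1 / K ≤ q (SemidirectProduct.inl (lampAt X H o h)) := by
    intro h hh
    set A := (fun h : H => (SemidirectProduct.inl (lampAt X H o h) : PWreath Γ X H)) ''
      (insert (1 : H) (SH : Set H)) with hAdef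
    have hmem : (SemidirectProduct.inl (lampAt X H o h) : PWreath Γ X H) ∈ A :=
      Set.mem_image_of_mem _ hh
    have h1 : unifOn A (SemidirectProduct.inl (lampAt X H o h)) = ((A.ncard : ℝ))⁻¹ :=
      Set.indicator_of_mem hmem _
    have hApos : 0 < A.ncard := by
      rw [Set.ncard_pos hfinH]
      exact ⟨_, hmem⟩
    have hAle : (A.ncard : ℝ) ≤ (KH : ℝ) := by
      have h2 : A.ncard ≤ KH := by
        refine le_trans (Set.ncard_image_le (SH.finite_toSet.insert 1)) ?_
        rw [hKHdef, ← Finset.coe_insert, Set.ncard_coe_finset]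
      exact_mod_cast h2
    have hA1 : (1:ℝ) ≤ (A.ncard : ℝ) := by exact_mod_cast hApos
    have h2 : 1 / K ≤ (1/2) * ((A.ncard : ℝ))⁻¹ := by
      have hn0 : (0:ℝ) < (A.ncard : ℝ) := by linarith
      have h5 : (1:ℝ)/(2 * (A.ncard:ℝ)) = (1/2) * ((A.ncard : ℝ))⁻¹ := by
        rw [one_div, mul_inv]
        norm_num
      rw [hKdef, ← h5]
      apply one_div_le_one_div_of_le (by linarith)
      linarith
    refine le_trans h2 ?_
    have hqval : q (SemidirectProduct.inl (lampAt X H o h))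
        = (1/2) * unifOn ((fun γ : Γ => (SemidirectProduct.inr γ : PWreath Γ X H)) ''
            (insert (1 : Γ) (SΓ : Set Γ))) (SemidirectProduct.inl (lampAt X H o h))
          + (1/2) * unifOn A (SemidirectProduct.inl (lampAt X H o h)) := rfl
    rw [hqval, h1]
    have : 0 ≤ (1/2) * unifOn ((fun γ : Γ =>
        (SemidirectProduct.inr γ : PWreath Γ X H)) '' (insert (1 : Γ) (SΓ : Set Γ)))
        (SemidirectProduct.inl (lampAt X H o h)) :=
      mul_nonneg (by norm_num) (aux_unifOn_nonneg _ _)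
    linarith
  -- lamp homomorphism facts
  have hlamp_coe : ∀ (h : H) (z : X),
      ((lampAt X H o h : Lamps X H) : X → H) z = if z = o then h else 1 := fun _ _ => rfl
  have hlamp_mul : ∀ h1 h2 : H,
      lampAt X H o (h1 * h2) = lampAt X H o h1 * lampAt X H o h2 := by
    intro h1 h2
    refine Subtype.ext (funext fun z => ?_)
    rw [Subgroup.coe_mul, Pi.mul_apply, hlamp_coe, hlamp_coe, hlamp_coe]
    by_cases hz : z = o <;> simp [hz]
  have hlamp_one : lampAt X H o 1 = 1 := by
    refine Subtype.ext (funext fun z => ?_)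
    rw [hlamp_coe]
    by_cases hz : z = o <;> simp [hz]
  have hinl_list : ∀ L : List H,
      (L.map (fun s => (SemidirectProduct.inl (lampAt X H o s) : PWreath Γ X H))).prod
        = SemidirectProduct.inl (lampAt X H o L.prod) := by
    intro L
    induction L with
    | nil => simp [hlamp_one]
    | cons s L ih =>
        rw [List.map_cons, List.prod_cons, ih, List.prod_cons, hlamp_mul, map_mul]
  have hinr_list : ∀ L : List Γ,
      (L.map (fun s => (SemidirectProduct.inr s : PWreath Γ X H))).prod
        = SemidirectProduct.inr L.prod := by
    intro L
    exact List.prod_hom L (SemidirectProduct.inr (φ := wreathAction Γ X H))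
  -- coordinates and injectivity
  set κ : X → PWreath Γ X H → H := fun x g => (g.left : X → H) (g.right • x) with hκdef
  set w : PWreath Γ X H → Γ × (X → H) := fun g =>
    (g.right, fun y => if g.right⁻¹ • y ∈ Bf then 1 else (g.left : X → H) y) with hwdef
  have hinjG : ∀ a b : PWreath Γ X H, w a = w b → (∀ x ∈ Bf, κ x a = κ x b) → a = b := by
    intro a b hwab hκab
    have hrab : a.right = b.right := congrArg Prod.fst hwab
    refine SemidirectProduct.ext ?_ hrab
    refine Subtype.ext (funext fun y => ?_)
    by_cases hy : a.right⁻¹ • y ∈ Bf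
    · have h1 := hκab (a.right⁻¹ • y) hy
      simp only [hκdef] at h1
      rw [smul_inv_smul, ← hrab, smul_inv_smul] at h1
      exact h1
    · have h2 := congrFun (congrArg Prod.snd hwab) y
      simp only [hwdef] at h2
      rw [← hrab] at h2
      rw [if_neg hy, if_neg hy] at h2
      exact h2
  -- main inequality
  refine aux_le_lambda hv ?_
  intro Ω hΩne hΩv
  by_contra hcon
  push_neg at hcon
  have hcard1 : (1:ℝ) ≤ (Ω.card : ℝ) := by exact_mod_cast Finset.card_pos.2 hΩne
  have hcardpos : (0:ℝ) < (Ω.card : ℝ) := by linarith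
  have hbd0 : 0 ≤ boundaryWeight q Ω := aux_bw_nonneg hqnn Ω
  have hbdlt : boundaryWeight q Ω < (Ω.card : ℝ) / (C * r) := by
    have h1 := mul_lt_mul_of_pos_left hcon hcardpos
    rw [← mul_assoc, mul_inv_cancel₀ (ne_of_gt hcardpos), one_mul, mul_one_div] at h1
    exact h1
  -- the fibers
  set Fib : X → PWreath Γ X H → Finset (PWreath Γ X H) := fun x a =>
    Ω.filter (fun b => w b = w a ∧ ∀ y ∈ Bf, y ≠ x → κ y b = κ y a) with hFibdef
  have hFibmem : ∀ x a b, b ∈ Fib x a ↔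
      (b ∈ Ω ∧ w b = w a ∧ ∀ y ∈ Bf, y ≠ x → κ y b = κ y a) := by
    intro x a b
    rw [hFibdef]
    exact Finset.mem_filter
  have hFibrefl : ∀ x, ∀ a ∈ Ω, a ∈ Fib x a := by
    intro x a ha
    rw [hFibmem]
    exact ⟨ha, rfl, fun _ _ _ => rfl⟩
  have hFibsub : ∀ x, ∀ a, Fib x a ⊆ Ω := by
    intro x a b hb
    exact ((hFibmem x a b).1 hb).1
  have hFibcl : ∀ x, ∀ a ∈ Ω, ∀ b ∈ Fib x a, Fib x b = Fib x a := by
    intro x a _ b hb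
    rw [hFibmem] at hb
    obtain ⟨hbΩ, hbw, hbκ⟩ := hb
    ext c
    rw [hFibmem, hFibmem]
    constructor
    · rintro ⟨h1, h2, h3⟩
      exact ⟨h1, h2.trans hbw, fun y hy hyx => (h3 y hy hyx).trans (hbκ y hy hyx)⟩
    · rintro ⟨h1, h2, h3⟩
      exact ⟨h1, h2.trans hbw.symm, fun y hy hyx => (h3 y hy hyx).trans (hbκ y hy hyx).symm⟩
  -- per-site bound
  have hsite : ∀ x ∈ Bf,
      ((Ω.card : ℝ) / 2) * Real.log vr ≤ ∑ a ∈ Ω, Real.log ((Fib x a).card) := by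
    intro x hx
    have hxball : x ∈ schreierBall (SΓ : Set Γ) o r := by
      rw [hBfdef] at hx
      exact (Set.Finite.mem_toFinset hBfin).1 hx
    obtain ⟨Lx, hLxS, hLxlen, hLxprod⟩ := hxball
    set γx : Γ := Lx.prod with hγxdef
    set ux : H → PWreath Γ X H := fun h =>
      SemidirectProduct.inr γx * SemidirectProduct.inl (lampAt X H o h) *
        (SemidirectProduct.inr γx)⁻¹ with huxdef
    have hux_inl : ∀ h : H, ux h
        = SemidirectProduct.inl ((wreathAction Γ X H γx) (lampAt X H o h)) := by
      intro h
      rw [SemidirectProduct.inl_aut]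
      rw [huxdef]
      simp only
      rw [map_inv]
    have hright : ∀ (g : PWreath Γ X H) (h : H), (g * ux h).right = g.right := by
      intro g h
      rw [hux_inl h, SemidirectProduct.mul_right, SemidirectProduct.right_inl, mul_one]
    have hshift : ∀ (γ : Γ) (f : Lamps X H) (z : X),
        (((wreathAction Γ X H γ) f : Lamps X H) : X → H) z = (f : X → H) (γ⁻¹ • z) :=
      fun _ _ _ => rfl
    have hval : ∀ (g : PWreath Γ X H) (h : H) (y : X),
        ((g * ux h).left : X → H) y
          = ((g.left : X → H) y) * (if y = g.right • x then h else 1) := by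
      intro g h y
      rw [hux_inl h, SemidirectProduct.mul_left, SemidirectProduct.left_inl]
      rw [Subgroup.coe_mul, Pi.mul_apply]
      congr 1
      rw [hshift, hshift, hlamp_coe]
      by_cases hy : y = g.right • x
      · have hcond : γx⁻¹ • (g.right⁻¹ • y) = o := by
          rw [hy, inv_smul_smul, ← hLxprod, inv_smul_smul]
        rw [if_pos hy, if_pos hcond]
      · have hcondneg : ¬ γx⁻¹ • (g.right⁻¹ • y) = o := by
          intro hcond
          apply hy
          have h1 : g.right⁻¹ • y = γx • o := by rw [← hcond, smul_inv_smul]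
          rw [hLxprod] at h1
          rw [← h1, smul_inv_smul]
        rw [if_neg hy, if_neg hcondneg]
    have hκx : ∀ (g : PWreath Γ X H) (h : H), κ x (g * ux h) = κ x g * h := by
      intro g h
      simp only [hκdef]
      rw [hright, hval, if_pos rfl]
    have hκy : ∀ (g : PWreath Γ X H) (h : H), ∀ y, y ∈ Bf → y ≠ x →
        κ y (g * ux h) = κ y g := by
      intro g h y _ hyx
      simp only [hκdef]
      rw [hright, hval, if_neg, mul_one]
      intro heq
      exact hyx ((smul_left_cancel_iff _).1 heq)
    have hwmul : ∀ (g : PWreath Γ X H) (h : H), w (g * ux h) = w g := by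
      intro g h
      simp only [hwdef]
      rw [hright]
      refine congrArg (Prod.mk g.right) (funext fun y => ?_)
      by_cases hy : g.right⁻¹ • y ∈ Bf
      · rw [if_pos hy, if_pos hy]
      · rw [if_neg hy, if_neg hy, hval, if_neg, mul_one]
        intro heq
        apply hy
        rw [heq, inv_smul_smul]
        exact hx
    set e : PWreath Γ X H → ℝ := fun a =>
      ∑' h : H, Set.indicator {h' : H | a * ux h' ∉ Ω} (η r) h with hedef
    have hennn : ∀ a, 0 ≤ e a := fun a =>
      tsum_nonneg fun h => Set.indicator_nonneg (fun z _ => hηnn z) h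
    have hescub : ∀ h : H, η r h ≠ 0 →
        (escC Ω (ux h) : ℝ) ≤ (3 * r) * (K * boundaryWeight q Ω) := by
      intro h hh
      obtain ⟨Lh, hLhS, hLhlen, hLhprod⟩ := hηsupp r h hh
      set Wl : List (PWreath Γ X H) :=
        (Lx.map (fun s => (SemidirectProduct.inr s : PWreath Γ X H)))
        ++ ((Lh.map (fun s => (SemidirectProduct.inl (lampAt X H o s) : PWreath Γ X H)))
        ++ ((Lx.map (fun s => s⁻¹)).reverse.map
            (fun s => (SemidirectProduct.inr s : PWreath Γ X H)))) with hWldef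
      have hWprod : Wl.prod = ux h := by
        rw [hWldef, List.prod_append, List.prod_append, hinr_list, hinl_list, hinr_list,
          hLhprod]
        rw [huxdef]
        simp only
        rw [← List.prod_inv_reverse, map_inv, ← mul_assoc, hγxdef]
      have hWlen : (Wl.length : ℝ) ≤ 3 * r := by
        rw [hWldef]
        simp only [List.length_append, List.length_map, List.length_reverse]
        push_cast
        have h1 : (Lx.length : ℝ) ≤ r := by exact_mod_cast hLxlen
        have h2 : (Lh.length : ℝ) ≤ r := by exact_mod_cast hLhlen
        linarith
      have hletters : ∀ u ∈ Wl, (escC Ω u : ℝ) ≤ K * boundaryWeight q Ω := by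
        intro u hu
        have hq_ge : 1 / K ≤ q u := by
          rw [hWldef] at hu
          simp only [List.mem_append, List.mem_map, List.mem_reverse] at hu
          rcases hu with ⟨s, hs, rfl⟩ | ⟨s, hs, rfl⟩ | ⟨s, hs, rfl⟩
          · exact hqΓ s (Set.mem_insert_of_mem _ (hLxS s hs))
          · exact hqH s (Set.mem_insert_of_mem _ (hLhS s hs))
          · obtain ⟨t, ht, rfl⟩ := hs
            refine hqΓ t⁻¹ (Set.mem_insert_of_mem _ ?_)
            exact Finset.mem_coe.2 (hSΓsym t (Finset.mem_coe.1 (hLxS t ht)))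
        have h1 := aux_mul_escC_le hqnn hqsummable Ω u
        have h2 : (1 / K) * (escC Ω u : ℝ) ≤ boundaryWeight q Ω :=
          le_trans (mul_le_mul_of_nonneg_right hq_ge (Nat.cast_nonneg _)) h1
        calc (escC Ω u : ℝ) = K * ((1 / K) * (escC Ω u : ℝ)) := by
              rw [one_div, ← mul_assoc, mul_inv_cancel₀ (ne_of_gt hK0), one_mul]
          _ ≤ K * boundaryWeight q Ω := mul_le_mul_of_nonneg_left h2 (le_of_lt hK0)
      calc (escC Ω (ux h) : ℝ) = (escC Ω Wl.prod : ℝ) := by rw [hWprod]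
        _ ≤ (Wl.length : ℝ) * (K * boundaryWeight q Ω) :=
            aux_escC_prod Ω (K * boundaryWeight q Ω)
              (mul_nonneg (le_of_lt hK0) hbd0) Wl hletters
        _ ≤ (3 * r) * (K * boundaryWeight q Ω) :=
            mul_le_mul_of_nonneg_right hWlen (mul_nonneg (le_of_lt hK0) hbd0)
    have hpt : ∀ h : H, ∑ a ∈ Ω, Set.indicator {h' : H | a * ux h' ∉ Ω} (η r) h
        = η r h * (escC Ω (ux h) : ℝ) := by
      intro h
      have h1 : ∀ a, Set.indicator {h' : H | a * ux h' ∉ Ω} (η r) h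
          = η r h * (if a * ux h ∉ Ω then (1:ℝ) else 0) := by
        intro a
        by_cases hmem : a * ux h ∉ Ω
        · rw [Set.indicator_of_mem (by simpa using hmem), if_pos hmem, mul_one]
        · rw [Set.indicator_of_notMem (by simpa using hmem), if_neg hmem, mul_zero]
      rw [Finset.sum_congr rfl (fun a _ => h1 a), ← Finset.mul_sum]
      congr 1
      rw [Finset.sum_boole]
      norm_cast
      unfold escC
      exact congrArg Finset.card (Finset.ext fun g => by simp only [Finset.mem_filter])
    have hsum_e : ∑ a ∈ Ω, e a < (Ω.card : ℝ) / 4 := by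
      have hswap : ∑ a ∈ Ω, e a
          = ∑' h : H, ∑ a ∈ Ω, Set.indicator {h' : H | a * ux h' ∉ Ω} (η r) h := by
        simp only [hedef]
        exact (Summable.tsum_finsetSum (fun a _ => hηsummable.indicator _)).symm
      have hle1 : ∑ a ∈ Ω, e a ≤ (3 * r) * (K * boundaryWeight q Ω) := by
        rw [hswap, tsum_congr hpt]
        have hptle : ∀ h : H, η r h * (escC Ω (ux h) : ℝ)
            ≤ η r h * ((3 * r) * (K * boundaryWeight q Ω)) := by
          intro h
          by_cases hh : η r h = 0
          · rw [hh, zero_mul, zero_mul]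
          · exact mul_le_mul_of_nonneg_left (hescub h hh) (hηnn h)
        calc ∑' h : H, η r h * (escC Ω (ux h) : ℝ)
            ≤ ∑' h : H, η r h * ((3 * r) * (K * boundaryWeight q Ω)) := by
              refine Summable.tsum_le_tsum hptle ?_ ?_
              · refine Summable.of_nonneg_of_le ?_ hptle (hηsummable.mul_right _)
                intro h
                exact mul_nonneg (hηnn h) (Nat.cast_nonneg _)
              · exact hηsummable.mul_right _
          _ = (3 * r) * (K * boundaryWeight q Ω) := by
              rw [tsum_mul_right, hηtsum, one_mul]
      refine lt_of_le_of_lt hle1 ?_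
      have h2 : (3 * (r:ℝ)) * (K * boundaryWeight q Ω)
          < (3 * (r:ℝ)) * (K * ((Ω.card : ℝ) / (C * r))) := by
        apply mul_lt_mul_of_pos_left _ (by positivity : (0:ℝ) < 3 * (r:ℝ))
        exact mul_lt_mul_of_pos_left hbdlt hK0
      refine lt_of_lt_of_le h2 (le_of_eq ?_)
      rw [hCdef]
      exact aux_arith hK0 hr0
    have hAmem : ∀ a ∈ Ω, ∀ b ∈ Fib x a, ∀ h : H,
        (b * ux h ∈ Ω ↔ κ x b * h ∈ (Fib x a).image (κ x)) := by
      intro a ha b hb h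
      obtain ⟨hbΩ, hbw, hbκ⟩ := (hFibmem x a b).1 hb
      constructor
      · intro hmem
        refine Finset.mem_image.2 ⟨b * ux h, ?_, hκx b h⟩
        rw [hFibmem]
        exact ⟨hmem, (hwmul b h).trans hbw,
          fun y hy hyx => (hκy b h y hy hyx).trans (hbκ y hy hyx)⟩
      · intro hmem
        obtain ⟨b', hb'f, hκb'⟩ := Finset.mem_image.1 hmem
        obtain ⟨hb'Ω, hb'w, hb'κ⟩ := (hFibmem x a b').1 hb'f
        have hbb : b' = b * ux h := by
          refine hinjG b' (b * ux h) ?_ ?_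
          · rw [hwmul]
            exact hb'w.trans hbw.symm
          · intro y hy
            by_cases hyx : y = x
            · subst hyx
              rw [hκx]
              exact hκb'
            · rw [hκy b h y hy hyx]
              exact (hb'κ y hy hyx).trans (hbκ y hy hyx).symm
        rw [← hbb]
        exact hb'Ω
    have hinjfib : ∀ a ∈ Ω, ∀ b ∈ Fib x a, ∀ b' ∈ Fib x a, κ x b = κ x b' → b = b' := by
      intro a _ b hb b' hb' hbb
      have h1 := (hFibmem x a b).1 hb
      have h2 := (hFibmem x a b').1 hb'
      refine hinjG b b' (h1.2.1.trans h2.2.1.symm) fun y hy => ?_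
      by_cases hyx : y = x
      · subst hyx; exact hbb
      · exact (h1.2.2 y hy hyx).trans (h2.2.2 y hy hyx).symm
    have hbdA : ∀ a ∈ Ω,
        boundaryWeight (η r) ((Fib x a).image (κ x)) = ∑ b ∈ Fib x a, e b := by
      intro a ha
      unfold boundaryWeight
      rw [Finset.sum_image (hinjfib a ha)]
      refine Finset.sum_congr rfl fun b hb => ?_
      simp only [hedef]
      refine tsum_congr fun h => ?_
      by_cases hmem : b * ux h ∈ Ω
      · have h1 : h ∉ {y : H | κ x b * y ∉ (Fib x a).image (κ x)} := by
          simp only [Set.mem_setOf_eq, not_not]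
          exact (hAmem a ha b hb h).1 hmem
        have h2 : h ∉ {h' : H | b * ux h' ∉ Ω} := by
          simp only [Set.mem_setOf_eq, not_not]
          exact hmem
        rw [Set.indicator_of_notMem h1, Set.indicator_of_notMem h2]
      · have h1 : h ∈ {y : H | κ x b * y ∉ (Fib x a).image (κ x)} := by
          simp only [Set.mem_setOf_eq]
          exact fun hc => hmem ((hAmem a ha b hb h).2 hc)
        have h2 : h ∈ {h' : H | b * ux h' ∉ Ω} := hmem
        rw [Set.indicator_of_mem h1, Set.indicator_of_mem h2]
    have hsmall : ∀ a ∈ Ω, ((Fib x a).card : ℝ) < vr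
        → ((Fib x a).card : ℝ) / 2 < ∑ b ∈ Fib x a, e b := by
      intro a ha hlt
      have hinj' : Set.InjOn (κ x) ((Fib x a) : Set (PWreath Γ X H)) := by
        intro b hb b' hb' hbb
        exact hinjfib a ha b (Finset.mem_coe.1 hb) b' (Finset.mem_coe.1 hb') hbb
      have hcardA : ((Fib x a).image (κ x)).card = (Fib x a).card :=
        Finset.card_image_of_injOn hinj'
      have hAne : ((Fib x a).image (κ x)).Nonempty :=
        ⟨κ x a, Finset.mem_image_of_mem _ (hFibrefl x a ha)⟩
      have h1A : (1:ℝ) ≤ (((Fib x a).image (κ x)).card : ℝ) := by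
        exact_mod_cast Finset.card_pos.2 hAne
      have hlam := hkey (((Fib x a).image (κ x)).card : ℝ) h1A (by rw [hcardA]; exact hlt)
      have hle := aux_lambda_le hηnn hAne (le_refl (((Fib x a).image (κ x)).card : ℝ))
      have h2 : 1 / 2 < (((Fib x a).image (κ x)).card : ℝ)⁻¹
          * boundaryWeight (η r) ((Fib x a).image (κ x)) := lt_of_lt_of_le hlam hle
      have hApos : (0:ℝ) < (((Fib x a).image (κ x)).card : ℝ) := by linarith
      have h3 := mul_lt_mul_of_pos_left h2 hApos
      rw [← mul_assoc, mul_inv_cancel₀ (ne_of_gt hApos), one_mul] at h3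
      rw [hbdA a ha] at h3
      rw [hcardA] at h3
      linarith
    have hmark := aux_markov Ω (Fib x) (fun a _ => hFibsub x a) (hFibrefl x)
      (hFibcl x) e (fun a _ => hennn a) vr hsmall
    have hlogpt : ∀ a ∈ Ω,
        Real.log vr - (if ((Fib x a).card : ℝ) < vr then (1:ℝ) else 0) * Real.log vr
          ≤ Real.log ((Fib x a).card) := by
      intro a ha
      have hNa1 : (1:ℝ) ≤ ((Fib x a).card : ℝ) := by
        exact_mod_cast Finset.card_pos.2 ⟨a, hFibrefl x a ha⟩
      by_cases hsm : ((Fib x a).card : ℝ) < vr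
      · rw [if_pos hsm, one_mul, sub_self]
        exact Real.log_nonneg hNa1
      · rw [if_neg hsm, zero_mul, sub_zero]
        exact Real.log_le_log hvr0 (le_of_not_gt hsm)
    have hind : (∑ a ∈ Ω, (if ((Fib x a).card : ℝ) < vr then (1:ℝ) else 0))
        ≤ (Ω.card : ℝ) / 2 := by
      refine le_trans hmark ?_
      linarith
    have hlogvr0 : 0 ≤ Real.log vr := Real.log_nonneg (by linarith)
    have h1 := Finset.sum_le_sum hlogpt
    rw [Finset.sum_sub_distrib, Finset.sum_const, nsmul_eq_mul, ← Finset.sum_mul] at h1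
    have h2 : (∑ a ∈ Ω, (if ((Fib x a).card : ℝ) < vr then (1:ℝ) else 0)) * Real.log vr
        ≤ ((Ω.card : ℝ) / 2) * Real.log vr := mul_le_mul_of_nonneg_right hind hlogvr0
    linarith
  -- combine with entropy inequality
  have hEnt := aux_erasure Bf Ω w κ Fib (fun x a b => hFibmem x a b)
    (fun a _ b _ h1 h2 => hinjG a b h1 h2)
  have hfinal : (Bf.card : ℝ) * (((Ω.card : ℝ) / 2) * Real.log vr)
      ≤ (Ω.card : ℝ) * Real.log (Ω.card) := by
    calc (Bf.card : ℝ) * (((Ω.card : ℝ) / 2) * Real.log vr)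
        = ∑ _x ∈ Bf, (((Ω.card : ℝ) / 2) * Real.log vr) := by
          rw [Finset.sum_const, nsmul_eq_mul]
      _ ≤ ∑ x ∈ Bf, ∑ a ∈ Ω, Real.log ((Fib x a).card) := Finset.sum_le_sum hsite
      _ ≤ _ := hEnt
  have hlogS : ((Bf.card : ℝ) / 2) * Real.log vr ≤ Real.log (Ω.card) := by
    have h1 : (Ω.card : ℝ) * (((Bf.card : ℝ) / 2) * Real.log vr)
        ≤ (Ω.card : ℝ) * Real.log (Ω.card) := by
      calc (Ω.card : ℝ) * (((Bf.card : ℝ) / 2) * Real.log vr)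
          = (Bf.card : ℝ) * (((Ω.card : ℝ) / 2) * Real.log vr) := by ring
        _ ≤ _ := hfinal
    exact le_of_mul_le_mul_left h1 hcardpos
  have hS_ge : vr ^ ((Bf.card : ℝ) / C) ≤ (Ω.card : ℝ) := by
    have h2 : vr ^ ((Bf.card : ℝ) / 2) ≤ (Ω.card : ℝ) := by
      rw [Real.rpow_def_of_pos hvr0]
      calc Real.exp (Real.log vr * ((Bf.card : ℝ) / 2))
          ≤ Real.exp (Real.log (Ω.card)) := by
            rw [Real.exp_le_exp]
            rw [mul_comm]
            exact hlogS
        _ = (Ω.card : ℝ) := Real.exp_log hcardpos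
    refine le_trans (Real.rpow_le_rpow_of_exponent_le (le_of_lt hvr1) ?_) h2
    have hBc0 : (0:ℝ) ≤ (Bf.card : ℝ) := Nat.cast_nonneg _
    apply div_le_div_of_nonneg_left hBc0 ?_ ?_ <;> linarith
  rw [hncard] at hvle
  have hCv : C * v ≤ vr ^ ((Bf.card : ℝ) / C) := by
    have := mul_le_mul_of_nonneg_left hvle (le_of_lt hC0)
    rwa [← mul_assoc, mul_inv_cancel₀ (ne_of_gt hC0), one_mul] at this
  have : C * v ≤ v := le_trans hCv (le_trans hS_ge hΩv)
  nlinarith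
end AuxEntropy
end

section
/- Let Γ act on a set X with Schreier graph 𝒮 of basepoint o and finite symmetric generating set S, let J_n ⊆ B_n be finite subsets of 𝒮, and let F_n be a (J_n, B_n)-admissible function on the finite subsets of X. Set Ũ_n = { f ∈ ⊕_{x∈𝒮} ℤ : supp f ∈ supp F_n }. Fix g_{n,0} = (Υ_{n,0}, e) ∈ ℤ ≀_𝒮 Γ and a sequence (g_i)_{i≥1} of elements of ℤ ≀_𝒮 Γ with each g_i ∈ {(±1₁^o, e_Γ)} ∪ S, and write g_k ⋯ g₁ g_{n,0} = (Υ_{n,k}, γ_{n,k}). If Υ_{n,k} ∈ Ũ_n for all 0 ≤ k ≤ m, then the inverted orbit 𝒪(g_m ⋯ g₁; J_n) (computed from the actions of the g_i on X, lamp generators acting trivially) satisfies 𝒪(g_m ⋯ g₁; J_n) ⊆ supp(Υ_{n,m}) = g_m ⋯ g₁ · supp(Υ_{n,0}). -/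
open scoped Pointwise

open Paper

theorem statement5
    (Γ : Type) [Group Γ] (X : Type) [MulAction Γ X] (o : X)
    (htrans : ∀ x : X, ∃ g : Γ, g • o = x)
    (S : Finset Γ) (hSsym : ∀ s ∈ S, s⁻¹ ∈ S)
    (hSgen : Subgroup.closure (S : Set Γ) = ⊤)
    (J B : Finset X) (hJB : J ⊆ B)
    (F : Finset X → ℝ) (hFadm : Admissible (Γ := Γ) J B F)
    (Υ₀ : Lamps X (Multiplicative ℤ))
    (g : ℕ → PWreath Γ X (Multiplicative ℤ))
    (hg : ∀ i : ℕ, 1 ≤ i →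
      g i = SemidirectProduct.inl
              (lampAt X (Multiplicative ℤ) o (Multiplicative.ofAdd (1 : ℤ))) ∨
      g i = SemidirectProduct.inl
              (lampAt X (Multiplicative ℤ) o (Multiplicative.ofAdd (-1 : ℤ))) ∨
      ∃ s ∈ S, g i = SemidirectProduct.inr s)
    (p : ℕ → PWreath Γ X (Multiplicative ℤ))
    (hp0 : p 0 = SemidirectProduct.inl Υ₀)
    (hpk : ∀ k : ℕ, p (k + 1) = g (k + 1) * p k)
    (m : ℕ)
    (hU : ∀ k ≤ m, ∃ Y : Finset X,
      (Y : Set X) = Function.mulSupport ((p k).left : X → Multiplicative ℤ) ∧ F Y ≠ 0) :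
    (∀ x ∈ J, invertedOrbit ((List.range m).map fun i => g (m - i)) x ⊆
      Function.mulSupport ((p m).left : X → Multiplicative ℤ)) ∧
    Function.mulSupport ((p m).left : X → Multiplicative ℤ) =
      (p m).right • Function.mulSupport (Υ₀ : X → Multiplicative ℤ) := by
  classical
  obtain ⟨A, hA⟩ := hFadm
  -- enhanced support information from admissibility
  have hsupp : ∀ k ≤ m, ∃ Y : Finset X,
      (Y : Set X) = Function.mulSupport ((p k).left : X → Multiplicative ℤ) ∧
      Y.card = A.card ∧ J ⊆ Y := by
    intro k hk
    obtain ⟨Y, hY, hF⟩ := hU k hk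
    obtain ⟨⟨γ, hγ⟩, hJ, -⟩ := hA Y hF
    exact ⟨Y, hY, by
      rw [hγ, Finset.card_image_of_injective _ (MulAction.injective γ)], hJ⟩
  -- support of a shifted configuration
  have hshift : ∀ (γ : Γ) (f : Lamps X (Multiplicative ℤ)),
      Function.mulSupport
        ((wreathAction Γ X (Multiplicative ℤ) γ f : X → Multiplicative ℤ)) =
        γ • Function.mulSupport (f : X → Multiplicative ℤ) := by
    intro γ f
    ext x
    constructor
    · intro h
      exact Set.mem_smul_set.mpr ⟨γ⁻¹ • x, h, smul_inv_smul γ x⟩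
    · intro h
      obtain ⟨y, hy, rfl⟩ := Set.mem_smul_set.mp h
      show (f : X → Multiplicative ℤ) (γ⁻¹ • γ • y) ≠ 1
      rwa [inv_smul_smul]
  -- one-step lemma
  have hstep : ∀ k, k + 1 ≤ m →
      Function.mulSupport ((p (k+1)).left : X → Multiplicative ℤ) =
        (g (k+1)).right • Function.mulSupport ((p k).left : X → Multiplicative ℤ) := by
    intro k hk
    have hlamp : ∀ h : Multiplicative ℤ,
        g (k+1) = SemidirectProduct.inl (lampAt X (Multiplicative ℤ) o h) →
        Function.mulSupport ((p (k+1)).left : X → Multiplicative ℤ) =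
          (g (k+1)).right • Function.mulSupport ((p k).left : X → Multiplicative ℤ) := by
      intro h hgi
      have hleft : (p (k+1)).left = lampAt X (Multiplicative ℤ) o h * (p k).left := by
        rw [hpk k, hgi, SemidirectProduct.mul_left, SemidirectProduct.left_inl,
          SemidirectProduct.right_inl, map_one]
        rfl
      have hoff : ∀ x, x ≠ o →
          (x ∈ Function.mulSupport ((p (k+1)).left : X → Multiplicative ℤ) ↔
           x ∈ Function.mulSupport ((p k).left : X → Multiplicative ℤ)) := by
        intro x hx
        simp only [Function.mem_mulSupport, hleft]
        have hval : ((lampAt X (Multiplicative ℤ) o h * (p k).left :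
            Lamps X (Multiplicative ℤ)) : X → Multiplicative ℤ) x =
            ((p k).left : X → Multiplicative ℤ) x := by
          show (lampAt X (Multiplicative ℤ) o h : X → Multiplicative ℤ) x *
            ((p k).left : X → Multiplicative ℤ) x = _
          rw [show (lampAt X (Multiplicative ℤ) o h : X → Multiplicative ℤ) x = 1 from
            if_neg hx, one_mul]
        rw [hval]
      obtain ⟨Y₁, hY₁c, hY₁card, hY₁J⟩ := hsupp k (Nat.le_of_succ_le hk)
      obtain ⟨Y₂, hY₂c, hY₂card, hY₂J⟩ := hsupp (k+1) hk
      have hmem : ∀ x, x ≠ o → (x ∈ Y₂ ↔ x ∈ Y₁) := by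
        intro x hx
        rw [← Finset.mem_coe, ← Finset.mem_coe, hY₂c, hY₁c]
        exact hoff x hx
      have hYY : Y₂ = Y₁ := by
        by_cases ho2 : o ∈ Y₂ <;> by_cases ho1 : o ∈ Y₁
        · ext x
          by_cases hx : x = o
          · subst hx; simp [ho1, ho2]
          · exact hmem x hx
        · exfalso
          have hsub : Y₁ ⊆ Y₂ := by
            intro x hxY
            by_cases hx : x = o
            · exact absurd (hx ▸ hxY) ho1
            · exact (hmem x hx).mpr hxY
          have : Y₁.card < Y₂.card :=
            Finset.card_lt_card ⟨hsub, fun hsub' => ho1 (hsub' ho2)⟩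
          omega
        · exfalso
          have hsub : Y₂ ⊆ Y₁ := by
            intro x hxY
            by_cases hx : x = o
            · exact absurd (hx ▸ hxY) ho2
            · exact (hmem x hx).mp hxY
          have : Y₂.card < Y₁.card :=
            Finset.card_lt_card ⟨hsub, fun hsub' => ho2 (hsub' ho1)⟩
          omega
        · ext x
          by_cases hx : x = o
          · subst hx; simp [ho1, ho2]
          · exact hmem x hx
      calc Function.mulSupport ((p (k+1)).left : X → Multiplicative ℤ)
          = (Y₂ : Set X) := hY₂c.symm
        _ = (Y₁ : Set X) := by rw [hYY]
        _ = Function.mulSupport ((p k).left : X → Multiplicative ℤ) := hY₁c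
        _ = (g (k+1)).right • Function.mulSupport ((p k).left : X → Multiplicative ℤ) := by
            rw [hgi, SemidirectProduct.right_inl, one_smul]
    rcases hg (k+1) (Nat.le_add_left 1 k) with hgi | hgi | ⟨s, _, hgi⟩
    · exact hlamp _ hgi
    · exact hlamp _ hgi
    · have hleft : (p (k+1)).left =
          wreathAction Γ X (Multiplicative ℤ) s (p k).left := by
        rw [hpk k, hgi, SemidirectProduct.mul_left, SemidirectProduct.left_inr,
          SemidirectProduct.right_inr, one_mul]
      rw [hleft, hshift, hgi, SemidirectProduct.right_inr]
  set L : List (PWreath Γ X (Multiplicative ℤ)) :=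
    (List.range m).map fun i => g (m - i) with hL
  have hLlen : L.length = m := by simp [hL]
  have hchain : ∀ j ≤ m,
      Function.mulSupport ((p m).left : X → Multiplicative ℤ) =
        ((L.take j).prod).right •
          Function.mulSupport ((p (m - j)).left : X → Multiplicative ℤ) := by
    intro j hj
    induction j with
    | zero => simp
    | succ j ih =>
      have hj' : j ≤ m := Nat.le_of_succ_le hj
      have hjl : j < L.length := by rw [hLlen]; exact hj
      have hget : L[j] = g (m - j) := by simp [hL]
      have h1 := hstep (m - (j+1)) (by omega)
      rw [show m - (j+1) + 1 = m - j by omega] at h1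
      rw [List.prod_take_succ L j hjl, hget, SemidirectProduct.mul_right, mul_smul,
        ← h1]
      exact ih hj'
  have hmain2 : ∀ k, k ≤ m →
      Function.mulSupport ((p k).left : X → Multiplicative ℤ) =
        (p k).right • Function.mulSupport (Υ₀ : X → Multiplicative ℤ) := by
    intro k
    induction k with
    | zero =>
      intro _
      rw [hp0, SemidirectProduct.left_inl, SemidirectProduct.right_inl, one_smul]
    | succ k ih =>
      intro hk
      rw [hstep k hk, ih (Nat.le_of_succ_le hk), hpk k, SemidirectProduct.mul_right,
        mul_smul]
  refine ⟨?_, hmain2 m le_rfl⟩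
  intro x hx y hy
  obtain ⟨j, hj, rfl⟩ := hy
  have hjm : j ≤ m := hLlen ▸ hj
  rw [hchain j hjm]
  obtain ⟨Y, hYc, -, hJY⟩ := hsupp (m - j) (Nat.sub_le m j)
  refine Set.mem_smul_set.mpr ⟨x, ?_, rfl⟩
  rw [← hYc]
  exact hJY hx
end
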